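/- arXiv:2104.04812 — 7 statements merged into one kernel-verified Lean document; each statement's English description precedes it below -/
import Mathlib

section
/- Let φ be a Δ-regular function (C², φ(0)=0, increasing, concave, φ→∞, φ'→0, and |φ''| ≤ (φ')² Δ(1/φ') with Δ non-decreasing). Then for all t > 0, φ'(t) · Δ(1/φ'(t)) ≳ 1/t, i.e., there is a constant c > 0 with t·φ'(t)·Δ(1/φ'(t)) ≥ c for all sufficiently large t. -/
open Set Filter

/-- If `φ` is `Δ`-regular, then `φ'(t)·Δ(1/φ'(t)) ≳ 1/t`: there is `c > 0` with
`t·φ'(t)·Δ(1/φ'(t)) ≥ c` for all sufficiently large `t`. -/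
theorem regularity_lower_bound (φ Δ : ℝ → ℝ)
    (hφ0 : φ 0 = 0)
    (hφnonneg : ∀ t, 0 ≤ t → 0 ≤ φ t)
    (hmono : StrictMonoOn φ (Ici 0))
    (hconc : ConcaveOn ℝ (Ici 0) φ)
    (hC2 : ContDiffOn ℝ 2 φ (Ici 0))
    (hφtop : Tendsto φ atTop atTop)
    (hφ'0 : Tendsto (deriv φ) atTop (nhds 0))
    (hΔmono : MonotoneOn Δ (Ioi 0))
    (hΔpos : ∀ s, 0 < s → 0 < Δ s)
    (hreg : ∀ t, 0 < t → |deriv (deriv φ) t| ≤ (deriv φ t) ^ 2 * Δ (1 / deriv φ t)) :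
    ∃ c : ℝ, 0 < c ∧ ∃ T : ℝ, ∀ t, T ≤ t → c ≤ t * deriv φ t * Δ (1 / deriv φ t) := by
  -- basic differentiability facts at interior points
  have hcd : ∀ t : ℝ, 0 < t → ContDiffAt ℝ 2 φ t := fun t ht =>
    hC2.contDiffAt (Ici_mem_nhds ht)
  have hdiff : ∀ t : ℝ, 0 < t → DifferentiableAt ℝ φ t := fun t ht =>
    (hcd t ht).differentiableAt (by norm_num)
  have hd2 : ∀ t : ℝ, 0 < t → DifferentiableAt ℝ (deriv φ) t := by
    intro t ht
    obtain ⟨u, hu, hcu⟩ := (hcd t ht).contDiffOn (le_refl 2) (by simp)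
    have hto : t ∈ interior u := mem_interior_iff_mem_nhds.2 hu
    have h1 : ContDiffOn ℝ 1 (deriv φ) (interior u) :=
      (hcu.mono interior_subset).deriv_of_isOpen isOpen_interior (by norm_num)
    exact ((h1.differentiableOn (by norm_num)) t hto).differentiableAt
      (isOpen_interior.mem_nhds hto)
  -- the derivative is antitone on `Ioi 0`
  have hanti : AntitoneOn (deriv φ) (Ioi 0) :=
    (hconc.subset Ioi_subset_Ici_self (convex_Ioi 0)).antitoneOn_deriv
      (fun x hx => hdiff x hx)
  -- the derivative is positive on `Ioi 0`
  have hpos : ∀ t : ℝ, 0 < t → 0 < deriv φ t := by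
    intro t ht
    have hlt : t < t + 1 := by linarith
    obtain ⟨c, hc, hc'⟩ := exists_deriv_eq_slope φ hlt
      (hC2.continuousOn.mono (fun x hx => le_trans ht.le hx.1))
      (fun x hx => (hdiff x (lt_trans ht hx.1)).differentiableWithinAt)
    have hslope : 0 < deriv φ c := by
      rw [hc']
      have := hmono (mem_Ici.2 ht.le) (mem_Ici.2 (by linarith : (0:ℝ) ≤ t + 1)) hlt
      have h1 : (0:ℝ) < t + 1 - t := by linarith
      exact div_pos (by linarith) h1
    exact lt_of_lt_of_le hslope (hanti (mem_Ioi.2 ht) (mem_Ioi.2 (lt_trans ht hc.1)) hc.1.le)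
  set ψ : ℝ → ℝ := fun s => 1 / deriv φ s with hψdef
  have hψpos : ∀ t : ℝ, 0 < t → 0 < ψ t := fun t ht => one_div_pos.2 (hpos t ht)
  -- ψ tends to infinity
  have hψtop : Tendsto ψ atTop atTop := by
    have h1 : Tendsto (deriv φ) atTop (nhdsWithin 0 (Ioi 0)) :=
      tendsto_nhdsWithin_of_tendsto_nhds_of_eventually_within _ hφ'0
        (eventually_atTop.2 ⟨1, fun t ht => hpos t (by linarith)⟩)
    simpa [hψdef, one_div, Pi.inv_def] using h1.inv_tendsto_nhdsGT_zero
  -- ψ is monotone on positive reals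
  have hψmono : ∀ a b : ℝ, 0 < a → a ≤ b → ψ a ≤ ψ b := fun a b ha hab =>
    one_div_le_one_div_of_le (hpos b (lt_of_lt_of_le ha hab))
      (hanti (mem_Ioi.2 ha) (mem_Ioi.2 (lt_of_lt_of_le ha hab)) hab)
  -- derivative of ψ
  have hψderiv : ∀ s : ℝ, 0 < s →
      HasDerivAt ψ (-(deriv (deriv φ) s) / (deriv φ s) ^ 2) s := by
    intro s hs
    have h1 : HasDerivAt (deriv φ) (deriv (deriv φ) s) s := (hd2 s hs).hasDerivAt
    have h2 := h1.inv (ne_of_gt (hpos s hs))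
    simpa [hψdef, one_div, Pi.inv_def] using h2
  -- key Lipschitz-type estimate
  have key : ∀ t : ℝ, 1 ≤ t → ψ t - ψ 1 ≤ Δ (ψ t) * (t - 1) := by
    intro t ht
    have hbound : ∀ x ∈ Icc (1:ℝ) t, ‖-(deriv (deriv φ) x) / (deriv φ x) ^ 2‖ ≤ Δ (ψ t) := by
      intro x hx
      have hx0 : 0 < x := lt_of_lt_of_le one_pos hx.1
      have hφ'x := hpos x hx0
      have hsq : (0:ℝ) < (deriv φ x) ^ 2 := by positivity
      have h1 : ‖-(deriv (deriv φ) x) / (deriv φ x) ^ 2‖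
          = |deriv (deriv φ) x| / (deriv φ x) ^ 2 := by
        rw [Real.norm_eq_abs, abs_div, abs_neg, abs_of_pos hsq]
      rw [h1, div_le_iff₀ hsq]
      calc |deriv (deriv φ) x| ≤ (deriv φ x) ^ 2 * Δ (1 / deriv φ x) := hreg x hx0
        _ ≤ Δ (ψ t) * (deriv φ x) ^ 2 := by
            rw [mul_comm]
            gcongr
            exact hΔmono (mem_Ioi.2 (hψpos x hx0)) (mem_Ioi.2 (hψpos t (by linarith)))
              (hψmono x t hx0 hx.2)
    have hlip := Convex.norm_image_sub_le_of_norm_hasDerivWithin_le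
      (f := ψ) (f' := fun s => -(deriv (deriv φ) s) / (deriv φ s) ^ 2)
      (fun x hx => (hψderiv x (lt_of_lt_of_le one_pos hx.1)).hasDerivWithinAt)
      hbound (convex_Icc 1 t) (left_mem_Icc.2 ht) (right_mem_Icc.2 ht)
    have h2 : ψ t - ψ 1 ≤ |ψ t - ψ 1| := le_abs_self _
    have h3 : ‖ψ t - ψ 1‖ = |ψ t - ψ 1| := Real.norm_eq_abs _
    have h4 : ‖t - (1:ℝ)‖ = t - 1 := by rw [Real.norm_eq_abs, abs_of_nonneg (by linarith)]
    rw [h3, h4] at hlip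
    linarith
  -- choose T
  obtain ⟨T, hT⟩ := eventually_atTop.1 (hψtop.eventually_ge_atTop (2 * ψ 1))
  refine ⟨1/2, by norm_num, max T 1, fun t ht => ?_⟩
  have ht1 : (1:ℝ) ≤ t := le_trans (le_max_right _ _) ht
  have htT : T ≤ t := le_trans (le_max_left _ _) ht
  have htpos : (0:ℝ) < t := lt_of_lt_of_le one_pos ht1
  have hψ1 : 0 < ψ 1 := hψpos 1 one_pos
  have hψt2 : 2 * ψ 1 ≤ ψ t := hT t htT
  have hψt : 0 < ψ t := lt_of_lt_of_le (by linarith) hψt2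
  have hΔt : 0 < Δ (ψ t) := hΔpos _ hψt
  have hk := key t ht1
  have h2 : ψ t / 2 ≤ Δ (ψ t) * t := by nlinarith
  have hφ't : deriv φ t = 1 / ψ t := by
    rw [hψdef]
    simp [one_div_one_div]
  show (1:ℝ)/2 ≤ t * deriv φ t * Δ (ψ t)
  have heq : t * deriv φ t * Δ (ψ t) = Δ (ψ t) * t / ψ t := by
    rw [hφ't]; field_simp
  rw [heq, le_div_iff₀ hψt]
  linarith
end

section
/- Let ξ : ℤ≥0 → {±1} be the Thue–Morse sequence and define S(x,h) = Σ_{0 ≤ k < x} ξ(k)ξ(k+h). Define the sequence σ : ℤ≥0 → ℚ by σ(0)=1, σ(2h)=σ(h), σ(2h+1) = -(σ(h)+σ(h+1))/2. Then there is an absolute constant C such that |S(x,h) - σ(h)·x| ≤ C·h·log(x+1) for all integers x ≥ 1 and h ≥ 0. -/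
/-- Mahler's estimate for binary correlations of the Thue–Morse sequence:
`|S(x,h) - σ(h)·x| ≤ C·h·log(x+1)` where `S(x,h) = Σ_{0 ≤ k < x} ξ(k)ξ(k+h)` and `σ`
satisfies `σ(0)=1`, `σ(2h)=σ(h)`, `σ(2h+1)=-(σ(h)+σ(h+1))/2`. -/
theorem thue_morse_correlations (ξ : ℕ → ℤ)
    (h0 : ξ 0 = 1)
    (heven : ∀ n, ξ (2 * n) = ξ n)
    (hodd : ∀ n, ξ (2 * n + 1) = -ξ n)
    (σ : ℕ → ℚ)
    (hσ0 : σ 0 = 1)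
    (hσe : ∀ h, σ (2 * h) = σ h)
    (hσo : ∀ h, σ (2 * h + 1) = -(σ h + σ (h + 1)) / 2) :
    ∃ C : ℝ, 0 < C ∧ ∀ x : ℕ, 1 ≤ x → ∀ h : ℕ,
      |(∑ k ∈ Finset.range x, ((ξ k * ξ (k + h) : ℤ) : ℝ)) - (σ h : ℝ) * x| ≤
        C * h * Real.log (x + 1) := by
  -- ξ takes values ±1
  have hξpm : ∀ n, ξ n = 1 ∨ ξ n = -1 := by
    intro n
    induction n using Nat.strong_induction_on with
    | _ n IH =>
      match n with
      | 0 => left; exact h0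
      | (n+1) =>
        rcases Nat.even_or_odd (n+1) with ⟨m, hm⟩ | ⟨m, hm⟩
        · have hmn : m < n + 1 := by omega
          rw [hm, show m + m = 2*m by ring, heven]
          exact IH m hmn
        · have hmn : m < n + 1 := by omega
          rw [hm, hodd]
          rcases IH m hmn with hh | hh <;> simp [hh]
  have hξsq : ∀ n, ξ n * ξ n = 1 := by
    intro n; rcases hξpm n with hh | hh <;> rw [hh] <;> norm_num
  -- σ 1 = -1/3
  have hσ1 : σ 1 = -1/3 := by
    have h1 := hσo 0
    norm_num [hσ0] at h1
    linarith
  -- |σ h| ≤ 1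
  have hσabs : ∀ h, |σ h| ≤ 1 := by
    intro h
    induction h using Nat.strong_induction_on with
    | _ h IH =>
      match h with
      | 0 => rw [hσ0]; norm_num
      | 1 => rw [hσ1, abs_le]; norm_num
      | (n+2) =>
        rcases Nat.even_or_odd (n+2) with ⟨m, hm⟩ | ⟨m, hm⟩
        · rw [hm, show m + m = 2*m by ring, hσe]
          exact IH m (by omega)
        · have h1 := IH m (by omega)
          have h2 := IH (m+1) (by omega)
          rw [hm, hσo, abs_div, abs_neg, show |(2:ℚ)| = 2 by norm_num]
          have h3 := abs_add_le (σ m) (σ (m+1))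
          rw [div_le_one (by norm_num)]
          linarith
  -- doubling of sums
  have sum_double : ∀ (f : ℕ → ℤ) (x : ℕ),
      ∑ k ∈ Finset.range (2*x), f k = ∑ k ∈ Finset.range x, (f (2*k) + f (2*k+1)) := by
    intro f x
    induction x with
    | zero => simp
    | succ n IH =>
      rw [Finset.sum_range_succ, ← IH, show 2*(n+1) = (2*n+1)+1 by ring,
        Finset.sum_range_succ, Finset.sum_range_succ]
      ring
  -- error term
  set E : ℕ → ℕ → ℚ := fun x h =>
    ((∑ k ∈ Finset.range x, ξ k * ξ (k+h) : ℤ) : ℚ) - σ h * x with hE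
  have hEeven : ∀ y m, E (2*y) (2*m) = 2 * E y m := by
    intro y m
    have hs : (∑ k ∈ Finset.range (2*y), ξ k * ξ (k + 2*m))
        = 2 * ∑ k ∈ Finset.range y, ξ k * ξ (k+m) := by
      rw [sum_double, Finset.mul_sum]
      refine Finset.sum_congr rfl fun k _ => ?_
      rw [show 2*k + 2*m = 2*(k+m) by ring, heven, heven,
        show 2*k + 1 + 2*m = 2*(k+m) + 1 by ring, hodd, hodd]
      ring
    simp only [hE, hs, hσe]
    push_cast
    ring
  have hEodd : ∀ y m, E (2*y) (2*m+1) = -(E y m) - E y (m+1) := by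
    intro y m
    have hs : (∑ k ∈ Finset.range (2*y), ξ k * ξ (k + (2*m+1)))
        = -(∑ k ∈ Finset.range y, ξ k * ξ (k+m)) - ∑ k ∈ Finset.range y, ξ k * ξ (k+(m+1)) := by
      rw [sum_double, neg_sub_left, ← Finset.sum_add_distrib, ← Finset.sum_neg_distrib]
      refine Finset.sum_congr rfl fun k _ => ?_
      rw [show 2*k + (2*m+1) = 2*(k+m) + 1 by ring, heven, hodd,
        show 2*k + 1 + (2*m+1) = 2*(k+(m+1)) by ring, hodd, heven]
      ring
    simp only [hE, hs, hσo]
    push_cast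
    ring
  have hEsucc : ∀ x h, E (x+1) h = E x h + (((ξ x * ξ (x+h) : ℤ) : ℚ) - σ h) := by
    intro x h
    simp only [hE, Finset.sum_range_succ]
    push_cast
    ring
  have hE0 : ∀ x, E x 0 = 0 := by
    intro x
    simp only [hE, hσ0]
    have hs : (∑ k ∈ Finset.range x, ξ k * ξ (k + 0)) = x := by
      rw [Finset.sum_congr rfl fun k _ => by rw [Nat.add_zero, hξsq k]]
      simp
    rw [hs]
    push_cast
    ring
  have hterm : ∀ a h, |((ξ a * ξ (a+h) : ℤ) : ℚ) - σ h| ≤ 2 := by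
    intro a h
    have h1 : |((ξ a * ξ (a+h) : ℤ) : ℚ)| = 1 := by
      rcases hξpm a with ha | ha <;> rcases hξpm (a+h) with hb | hb <;>
        rw [ha, hb] <;> norm_num
    calc |((ξ a * ξ (a+h) : ℤ) : ℚ) - σ h| ≤ |((ξ a * ξ (a+h) : ℤ) : ℚ)| + |σ h| :=
          abs_sub _ _
      _ ≤ 2 := by rw [h1]; linarith [hσabs h]
  -- step lemma: bound at 2y from bound at y
  have hstep : ∀ y : ℕ, (∀ h : ℕ, |E y h| ≤ 2 * h * (Nat.log 2 y + 1)) →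
      ∀ h : ℕ, |E (2*y) h| ≤ 2 * h * (Nat.log 2 y + 1) := by
    intro y IH h
    rcases Nat.even_or_odd h with ⟨m, hm⟩ | ⟨m, hm⟩
    · rw [hm, show m + m = 2*m by ring, hEeven, abs_mul, show |(2:ℚ)| = 2 by norm_num]
      have := IH m
      have hc : ((2*m : ℕ) : ℚ) = 2 * m := by push_cast; ring
      rw [hc]
      linarith [abs_nonneg (E y m)]
    · rw [hm, hEodd]
      have h1 := IH m
      have h2 := IH (m+1)
      have h3 : |-(E y m) - E y (m+1)| ≤ |E y m| + |E y (m+1)| := by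
        calc |-(E y m) - E y (m+1)| ≤ |-(E y m)| + |E y (m+1)| := abs_sub _ _
          _ = |E y m| + |E y (m+1)| := by rw [abs_neg]
      rw [show ((2*m + 1 : ℕ) : ℚ) = 2 * (m:ℚ) + 1 by push_cast; ring]
      rw [show ((m + 1 : ℕ) : ℚ) = (m:ℚ) + 1 by push_cast; ring] at h2
      nlinarith [(by positivity : (0:ℚ) ≤ (Nat.log 2 y : ℚ))]
  -- main bound
  have hmain : ∀ x h : ℕ, |E x h| ≤ 2 * h * (Nat.log 2 x + 1) := by
    intro x
    induction x using Nat.strong_induction_on with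
    | _ x IH =>
      intro h
      match x with
      | 0 =>
        have : E 0 h = 0 := by simp [hE]
        rw [this, abs_zero]
        positivity
      | 1 =>
        match h with
        | 0 => rw [hE0]; simp
        | (m+1) =>
          have he : E 1 (m+1) = E 0 (m+1) + (((ξ 0 * ξ (0+(m+1)) : ℤ) : ℚ) - σ (m+1)) :=
            hEsucc 0 (m+1)
          have hz : E 0 (m+1) = 0 := by simp [hE]
          rw [he, hz, zero_add]
          have := hterm 0 (m+1)
          have hm1 : (1:ℚ) ≤ ((m+1 : ℕ) : ℚ) := by exact_mod_cast Nat.one_le_iff_ne_zero.mpr (by omega)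
          have hl : (Nat.log 2 1 : ℚ) = 0 := by norm_num
          rw [hl]
          nlinarith
      | (x+2) =>
        rcases Nat.even_or_odd (x+2) with ⟨y, hy⟩ | ⟨y, hy⟩
        · -- even, y ≥ 1
          have hy1 : 1 ≤ y := by omega
          have hb := hstep y (fun h' => IH y (by omega) h')
          rw [hy, show y + y = 2*y by ring]
          have hmono : (Nat.log 2 y : ℚ) ≤ (Nat.log 2 (2*y) : ℚ) := by
            exact_mod_cast Nat.log_mono_right (by omega)
          calc |E (2*y) h| ≤ 2 * h * (Nat.log 2 y + 1) := hb h
            _ ≤ 2 * h * (Nat.log 2 (2*y) + 1) := by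
                nlinarith [(by positivity : (0:ℚ) ≤ (h:ℚ))]
        · -- odd, x+2 = 2y+1, y ≥ 1
          have hy1 : 1 ≤ y := by omega
          match h with
          | 0 =>
            rw [hE0]
            simp
          | (m+1) =>
            set h' := m + 1 with hh'
            have hb := hstep y (fun h'' => IH y (by omega) h'')
            have he : E (2*y+1) h' = E (2*y) h' + (((ξ (2*y) * ξ (2*y+h') : ℤ) : ℚ) - σ h') :=
              hEsucc (2*y) h'
            have habs : |E (2*y+1) h'| ≤ |E (2*y) h'| + 2 := by
              rw [he]
              calc |E (2*y) h' + (((ξ (2*y) * ξ (2*y+h') : ℤ) : ℚ) - σ h')|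
                  ≤ |E (2*y) h'| + |((ξ (2*y) * ξ (2*y+h') : ℤ) : ℚ) - σ h'| := abs_add_le _ _
                _ ≤ |E (2*y) h'| + 2 := by linarith [hterm (2*y) h']
            -- log (2y+1) ≥ log y + 1
            have hlog : Nat.log 2 y + 1 ≤ Nat.log 2 (2*y+1) := by
              have h1 : Nat.log 2 (y*2) = Nat.log 2 y + 1 :=
                Nat.log_mul_base (by norm_num) (by omega)
              have h2 : Nat.log 2 (y*2) ≤ Nat.log 2 (2*y+1) :=
                Nat.log_mono_right (by omega)
              omega
            have hlogq : (Nat.log 2 y : ℚ) + 1 ≤ (Nat.log 2 (2*y+1) : ℚ) := by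
              exact_mod_cast hlog
            have hm1 : (1:ℚ) ≤ (h' : ℚ) := by exact_mod_cast Nat.one_le_iff_ne_zero.mpr (by omega)
            rw [hy]
            calc |E (2*y+1) h'| ≤ |E (2*y) h'| + 2 := habs
              _ ≤ 2 * h' * (Nat.log 2 y + 1) + 2 := by linarith [hb h']
              _ ≤ 2 * h' * (Nat.log 2 (2*y+1) + 1) := by
                  nlinarith [(by positivity : (0:ℚ) ≤ (Nat.log 2 y : ℚ))]
  -- conclude with real logarithm
  have hl2 : (0:ℝ) < Real.log 2 := Real.log_pos (by norm_num)
  refine ⟨4 / Real.log 2, by positivity, ?_⟩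
  intro x hx h
  have key : |(∑ k ∈ Finset.range x, ((ξ k * ξ (k + h) : ℤ) : ℝ)) - (σ h : ℝ) * x|
      ≤ 2 * h * (Nat.log 2 x + 1) := by
    have hq := hmain x h
    have hr := (Rat.cast_le (K := ℝ)).mpr hq
    simp only [hE] at hr
    push_cast at hr ⊢
    convert hr using 2
  -- (log₂ x + 1) * log 2 ≤ 2 log (x+1)
  have hxpos : (0:ℝ) < x := by exact_mod_cast hx
  have hpow : ((2:ℝ) ^ (Nat.log 2 x)) ≤ x := by
    exact_mod_cast Nat.pow_log_le_self 2 (by omega)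
  have hlog1 : (Nat.log 2 x : ℝ) * Real.log 2 ≤ Real.log (x+1) := by
    rw [← Real.log_pow]
    exact Real.log_le_log (by positivity) (by linarith)
  have hlog2 : Real.log 2 ≤ Real.log (x+1) := by
    apply Real.log_le_log (by norm_num)
    have : (1:ℝ) ≤ x := by exact_mod_cast hx
    linarith
  have hkey2 : ((Nat.log 2 x : ℝ) + 1) * Real.log 2 ≤ 2 * Real.log (x+1) := by
    nlinarith
  have hh0 : (0:ℝ) ≤ (h:ℝ) := Nat.cast_nonneg h
  calc |(∑ k ∈ Finset.range x, ((ξ k * ξ (k + h) : ℤ) : ℝ)) - (σ h : ℝ) * x|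
      ≤ 2 * h * (Nat.log 2 x + 1) := key
    _ ≤ 4 / Real.log 2 * h * Real.log (x+1) := by
        rw [show (4:ℝ) / Real.log 2 * h * Real.log (x+1)
          = (4 * h * Real.log (x+1)) / Real.log 2 by ring, le_div_iff₀ hl2]
        nlinarith [mul_le_mul_of_nonneg_left hkey2 hh0]
end

section
/- Let χ_{2ⁿ} be the measure on [0,1] with density (∏_{0 ≤ j < n} 2 sin²(2^j π t)) dt. Then there exist constants c, C > 0 such that for every dyadic interval I = [p·2^{-m}, (p+1)·2^{-m}] ⊆ [0,1] with integer p ≥ 0 and every n > m, one has χ_{2ⁿ}(I) ≥ 2^{-m² - Cm}. -/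
set_option maxHeartbeats 1000000

open Real MeasureTheory Finset

noncomputable def tmP (n : ℕ) (t : ℝ) : ℝ :=
  ∏ j ∈ Finset.range n, 2 * Real.sin (2 ^ j * Real.pi * t) ^ 2

lemma tmP_nonneg (n : ℕ) (t : ℝ) : 0 ≤ tmP n t :=
  Finset.prod_nonneg fun j _ => by positivity

lemma tmP_continuous (n : ℕ) : Continuous (tmP n) := by
  unfold tmP
  exact continuous_finset_prod _ fun j _ => by continuity

lemma tmP_intInt (n : ℕ) (a b : ℝ) : IntervalIntegrable (tmP n) volume a b :=
  (tmP_continuous n).intervalIntegrable a b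

lemma sin_sq_add_int_mul_pi (x : ℝ) (k : ℤ) :
    Real.sin (x + k * Real.pi) ^ 2 = Real.sin x ^ 2 := by
  rw [Real.sin_add_int_mul_pi, mul_pow]
  rcases Int.even_or_odd k with h | h
  · rw [h.neg_one_zpow]; ring
  · rw [h.neg_one_zpow]; ring

lemma tmP_periodic (n : ℕ) : Function.Periodic (tmP n) 1 := by
  intro t
  unfold tmP
  refine Finset.prod_congr rfl fun j _ => ?_
  congr 1
  have h : (2:ℝ) ^ j * Real.pi * (t + 1) = 2 ^ j * Real.pi * t + ((2^j : ℤ) : ℝ) * Real.pi := by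
    push_cast; ring
  rw [h, sin_sq_add_int_mul_pi]

lemma tmP_succ (n : ℕ) (t : ℝ) :
    tmP (n+1) t = 2 * Real.sin (Real.pi * t) ^ 2 * tmP n (2*t) := by
  unfold tmP
  rw [Finset.prod_range_succ', mul_comm]
  congr 1
  · norm_num [mul_comm]
  · refine Finset.prod_congr rfl fun j _ => ?_
    congr 2
    ring

lemma tmP_mass (n : ℕ) : ∫ t in (0:ℝ)..1, tmP n t = 1 := by
  induction n with
  | zero => simp [tmP]
  | succ n ih =>
    have h1 : IntervalIntegrable (tmP (n+1)) volume 0 (1/2) := tmP_intInt _ _ _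
    have h2 : IntervalIntegrable (tmP (n+1)) volume (1/2) 1 := tmP_intInt _ _ _
    have hsplit : ∫ t in (0:ℝ)..1, tmP (n+1) t
        = (∫ t in (0:ℝ)..(1/2), tmP (n+1) t) + ∫ t in (1/2:ℝ)..1, tmP (n+1) t :=
      (intervalIntegral.integral_add_adjacent_intervals h1 h2).symm
    have hshift : ∫ t in (1/2:ℝ)..1, tmP (n+1) t
        = ∫ t in (0:ℝ)..(1/2), tmP (n+1) (t + 1/2) := by
      rw [intervalIntegral.integral_comp_add_right (tmP (n+1)) (1/2)]
      norm_num
    have hval : ∀ t : ℝ, tmP (n+1) (t + 1/2) = 2 * Real.cos (Real.pi * t) ^ 2 * tmP n (2*t) := by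
      intro t
      rw [tmP_succ]
      have e1 : Real.pi * (t + 1/2) = Real.pi * t + Real.pi/2 := by ring
      have e2 : (2:ℝ) * (t + 1/2) = 2*t + 1 := by ring
      rw [e1, Real.sin_add_pi_div_two, e2, tmP_periodic n (2*t)]
    have hcont1 : Continuous fun t : ℝ => 2 * Real.sin (Real.pi * t) ^ 2 * tmP n (2*t) := by
      exact (continuous_const.mul ((Real.continuous_sin.comp (continuous_const.mul continuous_id)).pow 2)).mul ((tmP_continuous n).comp (continuous_const.mul continuous_id))
    have hcont2 : Continuous fun t : ℝ => 2 * Real.cos (Real.pi * t) ^ 2 * tmP n (2*t) := by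
      exact (continuous_const.mul ((Real.continuous_cos.comp (continuous_const.mul continuous_id)).pow 2)).mul ((tmP_continuous n).comp (continuous_const.mul continuous_id))
    have hsum : ∫ t in (0:ℝ)..1, tmP (n+1) t = ∫ t in (0:ℝ)..(1/2),
        (2 * Real.sin (Real.pi * t) ^ 2 * tmP n (2*t)
          + 2 * Real.cos (Real.pi * t) ^ 2 * tmP n (2*t)) := by
      rw [hsplit, hshift,
        intervalIntegral.integral_add (hcont1.intervalIntegrable _ _) (hcont2.intervalIntegrable _ _)]
      congr 1
      · exact intervalIntegral.integral_congr fun t _ => tmP_succ n t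
      · exact intervalIntegral.integral_congr fun t _ => hval t
    have hval2 : ∀ t : ℝ, 2 * Real.sin (Real.pi * t) ^ 2 * tmP n (2*t)
        + 2 * Real.cos (Real.pi * t) ^ 2 * tmP n (2*t) = 2 * tmP n (2*t) := by
      intro t
      have := Real.sin_sq_add_cos_sq (Real.pi * t)
      linear_combination 2 * tmP n (2*t) * this
    rw [hsum, intervalIntegral.integral_congr fun t _ => hval2 t]
    have hc : ∫ t in (0:ℝ)..(1/2), 2 * tmP n (2*t)
        = 2 * ∫ t in (0:ℝ)..(1/2), tmP n (2*t) := by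
      exact intervalIntegral.integral_const_mul 2 _
    rw [hc, intervalIntegral.integral_comp_mul_left (tmP n) (by norm_num : (2:ℝ) ≠ 0)]
    norm_num [ih]

lemma sin_sq_add_int_mul_pi' (x : ℝ) (k : ℤ) :
    Real.sin (x + k * Real.pi) ^ 2 = Real.sin x ^ 2 := by
  rw [Real.sin_add_int_mul_pi, mul_pow]
  rcases Int.even_or_odd k with h | h
  · rw [h.neg_one_zpow]; ring
  · rw [h.neg_one_zpow]; ring

lemma sin_lb {u d : ℝ} (k : ℤ) (hd0 : 0 ≤ d) (h1 : d ≤ u - k) (h2 : u - k ≤ 1 - d) :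
    (2*d)^2 ≤ Real.sin (Real.pi * u) ^ 2 := by
  have hred : Real.sin (Real.pi * u) ^ 2 = Real.sin (Real.pi * (u - k)) ^ 2 := by
    have : Real.pi * u = Real.pi * (u - k) + k * Real.pi := by ring
    rw [this, sin_sq_add_int_mul_pi']
  rw [hred]
  set v := u - k with hv
  have hd2 : d ≤ 1/2 := by linarith
  have hv0 : 0 ≤ v := le_trans hd0 h1
  have hv1 : v ≤ 1 := by linarith
  have hsin : 2*d ≤ Real.sin (Real.pi * v) := by
    rcases le_or_gt v (1/2) with hc | hc
    · have := Real.mul_le_sin (x := Real.pi * v) (by positivity)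
        (by nlinarith [Real.pi_pos])
      have heq : 2 / Real.pi * (Real.pi * v) = 2 * v := by
        field_simp
      rw [heq] at this
      linarith
    · have heq : Real.sin (Real.pi * v) = Real.sin (Real.pi * (1 - v)) := by
        rw [show Real.pi * (1-v) = Real.pi - Real.pi * v by ring, Real.sin_pi_sub]
      have := Real.mul_le_sin (x := Real.pi * (1 - v)) (by nlinarith [Real.pi_pos])
        (by nlinarith [Real.pi_pos])
      have heq2 : 2 / Real.pi * (Real.pi * (1-v)) = 2 * (1-v) := by field_simp
      rw [heq2] at this
      rw [heq]
      linarith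
  have h2d : 0 ≤ 2*d := by linarith
  nlinarith [hsin]

lemma sum_odd (k : ℕ) : ∑ j ∈ Finset.range k, (2*j+1) = k^2 := by
  induction k with
  | zero => simp
  | succ k ih => rw [Finset.sum_range_succ, ih]; ring

lemma sum_refl (m : ℕ) : ∑ j ∈ Finset.range (m+1), (2*(m-j)+1) = (m+1)^2 := by
  calc ∑ j ∈ Finset.range (m+1), (2*(m-j)+1)
      = ∑ j ∈ Finset.range (m+1), (2*(m+1-1-j)+1) := by
        exact Finset.sum_congr rfl fun j hj => by omega
    _ = ∑ j ∈ Finset.range (m+1), (2*j+1) := Finset.sum_range_reflect (fun i => 2*i+1) (m+1)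
    _ = (m+1)^2 := sum_odd (m+1)

lemma half_pow (k : ℕ) : ((1/2:ℝ))^k = (2:ℝ)^(-(k:ℝ)) := by
  rw [one_div, inv_pow, ← Real.rpow_natCast 2 k, ← Real.rpow_neg (by norm_num)]

lemma tail_eq (m n : ℕ) (t : ℝ) :
    ∏ j ∈ Finset.Ico (m+1) n, (2 * Real.sin (2 ^ j * Real.pi * t) ^ 2)
      = tmP (n - (m+1)) (2^(m+1) * t) := by
  rw [Finset.prod_Ico_eq_prod_range]
  unfold tmP
  refine Finset.prod_congr rfl fun i _ => ?_
  congr 2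
  rw [pow_add]
  ring

lemma tail_integral (K m : ℕ) (a : ℝ) :
    ∫ t in a..(a + (1/2:ℝ)^(m+1)), tmP K (2^(m+1) * t) = (1/2:ℝ)^(m+1) := by
  have hc : ((2:ℝ)^(m+1)) ≠ 0 := by positivity
  rw [intervalIntegral.integral_comp_mul_left (tmP K) hc]
  have h1 : (2:ℝ)^(m+1) * (a + (1/2)^(m+1)) = 2^(m+1) * a + 1 := by
    rw [one_div, inv_pow]
    field_simp
  rw [h1, (tmP_periodic K).intervalIntegral_add_eq (2^(m+1)*a) 0]
  norm_num [tmP_mass K]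
  rw [one_div, inv_pow]

/-- Lower bound for the Thue–Morse spectral approximants on dyadic intervals: there is
`C > 0` such that for every dyadic interval `I = [p·2^{-m}, (p+1)·2^{-m}] ⊆ [0,1]` and
every `n > m`, `χ_{2ⁿ}(I) = ∫_I ∏_{0≤j<n} 2sin²(2^jπt) dt ≥ 2^{-m²-Cm}`. -/
theorem thue_morse_spectral_lower_bound :
    ∃ C : ℝ, 0 < C ∧ ∀ m n p : ℕ, m < n → p + 1 ≤ 2 ^ m →
      (2 : ℝ) ^ (-(m : ℝ) ^ 2 - C * m) ≤
        ∫ t in ((p : ℝ) / 2 ^ m)..(((p : ℝ) + 1) / 2 ^ m),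
          ∏ j ∈ Finset.range n, 2 * Real.sin (2 ^ j * Real.pi * t) ^ 2 := by
  refine ⟨5, by norm_num, fun m n p hmn hp => ?_⟩
  show (2:ℝ) ^ (-(m:ℝ)^2 - 5*m) ≤ ∫ t in ((p : ℝ) / 2 ^ m)..(((p : ℝ) + 1) / 2 ^ m), tmP n t
  rcases Nat.eq_zero_or_pos m with hm0 | hm1
  · subst hm0
    have hp0 : p = 0 := by omega
    subst hp0
    norm_num [tmP_mass n]
  -- main case : 1 ≤ m
  set A : ℝ := (p:ℝ)/2^m with hA
  set B : ℝ := ((p:ℝ)+1)/2^m with hB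
  set a' : ℝ := A + (1/2:ℝ)^(m+2) with ha'
  set b' : ℝ := a' + (1/2:ℝ)^(m+1) with hb'
  set K : ℕ := n - (m+1) with hK
  have hpow : (0:ℝ) < (1/2:ℝ)^m := by positivity
  have hBA : B = A + (1/2:ℝ)^m := by
    rw [hB, hA, div_pow, one_pow]; ring
  have hAa' : A ≤ a' := by
    rw [ha']; nlinarith [pow_pos (by norm_num : (0:ℝ) < 1/2) (m+2)]
  have ha'b' : a' ≤ b' := by
    rw [hb']; nlinarith [pow_pos (by norm_num : (0:ℝ) < 1/2) (m+1)]
  have hb'B : b' ≤ B := by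
    rw [hb', ha', hBA, pow_add, pow_add]
    nlinarith [hpow]
  -- pointwise bound on Icc a' b'
  have key : ∀ t ∈ Set.Icc a' b',
      (1/2:ℝ)^((m+1)^2) * tmP K (2^(m+1)*t) ≤ tmP n t := by
    intro t ht
    have hsplit : tmP n t
        = (∏ j ∈ Finset.range (m+1), (2 * Real.sin (2 ^ j * Real.pi * t) ^ 2))
          * ∏ j ∈ Finset.Ico (m+1) n, (2 * Real.sin (2 ^ j * Real.pi * t) ^ 2) :=
      (Finset.prod_range_mul_prod_Ico _ (by omega)).symm
    rw [hsplit, tail_eq m n t, ← hK]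
    refine mul_le_mul_of_nonneg_right ?_ (tmP_nonneg _ _)
    rw [← sum_refl m, ← Finset.prod_pow_eq_pow_sum]
    refine Finset.prod_le_prod (fun j _ => by positivity) (fun j hj => ?_)
    have hj' : j ≤ m := Nat.lt_succ_iff.mp (Finset.mem_range.mp hj)
    set e : ℕ := m - j with hedef
    have he : j + e = m := by omega
    have hQ : (0:ℝ) < 2^e := by positivity
    have h2j : (0:ℝ) < 2^j := by positivity
    have h2e : (2:ℝ)^m = 2^j * 2^e := by rw [← he, pow_add]
    have hpq : (p:ℝ) = 2^e * ((p / 2^e : ℕ):ℝ) + ((p % 2^e : ℕ):ℝ) := by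
      exact_mod_cast (Nat.div_add_mod p (2^e)).symm
    have haa : ((p % 2^e : ℕ):ℝ) ≤ 2^e - 1 := by
      have h := Nat.mod_lt p (show 0 < 2^e by positivity)
      have h2 : ((p % 2^e : ℕ):ℝ) + 1 ≤ ((2^e:ℕ):ℝ) := by exact_mod_cast h
      push_cast at h2
      linarith
    have haann : (0:ℝ) ≤ ((p % 2^e : ℕ):ℝ) := by positivity
    set k : ℤ := ((p / 2^e : ℕ) : ℤ) with hk
    have hkR : ((k:ℤ):ℝ) = ((p / 2^e : ℕ):ℝ) := by rw [hk]; norm_cast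
    set d : ℝ := (1/2:ℝ)^(e+2) with hddef
    have hd0 : (0:ℝ) ≤ d := by positivity
    have hd : d = 1/(4 * 2^e) := by
      rw [hddef, div_pow, one_pow, pow_add]
      norm_num
      ring
    have hA' : (2:ℝ)^j * a' = ((p / 2^e : ℕ):ℝ) + ((p % 2^e : ℕ):ℝ)/2^e + d := by
      rw [ha', hA, hd]
      have h1 : ((1:ℝ)/2)^(m+2) = 1/(2^j * 2^e * 4) := by
        rw [div_pow, one_pow, pow_add, h2e]
        norm_num
      rw [h1, h2e, hpq]
      field_simp
    have hB' : (2:ℝ)^j * b' = ((p / 2^e : ℕ):ℝ) + ((p % 2^e : ℕ):ℝ)/2^e + 3*d := by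
      rw [hb']
      have h1 : ((1:ℝ)/2)^(m+1) = 1/(2^j * 2^e * 2) := by
        rw [div_pow, one_pow, pow_add, h2e]
        norm_num
      rw [mul_add, hA', h1, hd]
      field_simp
      ring
    have ht1 : 2^j * a' ≤ 2^j * t := mul_le_mul_of_nonneg_left ht.1 (le_of_lt h2j)
    have ht2 : 2^j * t ≤ 2^j * b' := mul_le_mul_of_nonneg_left ht.2 (le_of_lt h2j)
    have haad : ((p % 2^e : ℕ):ℝ)/2^e ≤ 1 - 4*d := by
      have hrewr : (1:ℝ) - 4*d = (2^e - 1)/2^e := by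
        rw [hd]; field_simp
      rw [hrewr]
      gcongr
    have hx1 : d ≤ 2^j * t - k := by
      rw [hkR]
      have := hA' ▸ ht1
      nlinarith [div_nonneg haann (le_of_lt hQ)]
    have hx2 : 2^j * t - k ≤ 1 - d := by
      rw [hkR]
      have := hB' ▸ ht2
      nlinarith
    have hsin := sin_lb k hd0 hx1 hx2
    have hpi : Real.pi * (2^j * t) = 2^j * Real.pi * t := by ring
    rw [hpi] at hsin
    have hval : (1/2:ℝ)^(2*e+1) = 2 * (2*d)^2 := by
      rw [hddef]; ring
    rw [hval]
    linarith
  -- integral over middle half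
  have hcontK : Continuous fun t : ℝ => (1/2:ℝ)^((m+1)^2) * tmP K (2^(m+1)*t) :=
    continuous_const.mul ((tmP_continuous K).comp (continuous_const.mul continuous_id))
  have hmid : (1/2:ℝ)^((m+1)^2) * (1/2:ℝ)^(m+1) ≤ ∫ t in a'..b', tmP n t := by
    have h1 : ∫ t in a'..b', ((1/2:ℝ)^((m+1)^2) * tmP K (2^(m+1)*t))
        ≤ ∫ t in a'..b', tmP n t :=
      intervalIntegral.integral_mono_on ha'b' (hcontK.intervalIntegrable _ _)
        (tmP_intInt n a' b') key
    have h2 : ∫ t in a'..b', ((1/2:ℝ)^((m+1)^2) * tmP K (2^(m+1)*t))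
        = (1/2:ℝ)^((m+1)^2) * (1/2:ℝ)^(m+1) := by
      rw [intervalIntegral.integral_const_mul, hb', tail_integral K m a']
    linarith [h1, h2 ▸ h1]
  -- extend to full interval
  have hfull : ∫ t in a'..b', tmP n t ≤ ∫ t in A..B, tmP n t := by
    have e1 : ∫ t in A..B, tmP n t
        = (∫ t in A..a', tmP n t) + ((∫ t in a'..b', tmP n t) + ∫ t in b'..B, tmP n t) := by
      rw [intervalIntegral.integral_add_adjacent_intervals (tmP_intInt n a' b') (tmP_intInt n b' B),
        intervalIntegral.integral_add_adjacent_intervals (tmP_intInt n A a') (tmP_intInt n a' B)]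
    have n1 : 0 ≤ ∫ t in A..a', tmP n t :=
      intervalIntegral.integral_nonneg hAa' (fun u _ => tmP_nonneg n u)
    have n2 : 0 ≤ ∫ t in b'..B, tmP n t :=
      intervalIntegral.integral_nonneg hb'B (fun u _ => tmP_nonneg n u)
    rw [e1]; linarith
  -- put it together with rpow arithmetic
  have hrpow : (2:ℝ) ^ (-(m:ℝ)^2 - 5*m) ≤ (1/2:ℝ)^((m+1)^2) * (1/2:ℝ)^(m+1) := by
    rw [half_pow, half_pow, ← Real.rpow_add (by norm_num : (0:ℝ) < 2)]
    apply Real.rpow_le_rpow_of_exponent_le (by norm_num)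
    have hm1' : (1:ℝ) ≤ (m:ℝ) := by exact_mod_cast hm1
    push_cast
    nlinarith
  linarith [hrpow, hmid, hfull]
end

section
/- Let α be irrational and suppose that for all integers q ≥ 2, ‖qα‖ ≥ c(α)/(q f(q)) for a non-decreasing function f ≥ 1, where ‖t‖ is the distance from t to the nearest integer. For H ≥ 1 and k ≥ 0, let S_{k,H} = {1 ≤ h ≤ H : |1 − e(−2αh)| ≤ 2^{-k}}. Then |S_{k,H}| ≲ H f(2H) 2^{-k} + 1. -/
lemma abs_one_sub_exp_eq (θ : ℝ) :
    ‖1 - Complex.exp (θ * Complex.I)‖ = 2 * |Real.sin (θ / 2)| := by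
  have h : Complex.exp (θ * Complex.I) = (Real.cos θ : ℂ) + (Real.sin θ : ℂ) * Complex.I := by
    rw [Complex.exp_mul_I, Complex.ofReal_cos, Complex.ofReal_sin]
  have hcos : Real.cos θ = 2 * Real.cos (θ/2)^2 - 1 := by
    have := Real.cos_two_mul (θ/2)
    rw [show 2 * (θ/2) = θ by ring] at this
    linarith
  have hpy : Real.sin (θ/2)^2 + Real.cos (θ/2)^2 = 1 := Real.sin_sq_add_cos_sq _
  have hpy' : Real.sin θ^2 + Real.cos θ^2 = 1 := Real.sin_sq_add_cos_sq _
  have hsq : (‖1 - Complex.exp (θ * Complex.I)‖)^2 = (2 * |Real.sin (θ / 2)|)^2 := by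
    rw [Complex.sq_norm, h, Complex.normSq_apply]
    simp only [Complex.add_re, Complex.sub_re, Complex.one_re, Complex.ofReal_re,
      Complex.mul_re, Complex.I_re, Complex.I_im, Complex.ofReal_im, Complex.sub_im,
      Complex.add_im, Complex.one_im, Complex.mul_im]
    rw [mul_pow, sq_abs]
    nlinarith [hcos, hpy, hpy']
  have h1 : (0:ℝ) ≤ ‖1 - Complex.exp (θ * Complex.I)‖ := norm_nonneg _
  have h2 : (0:ℝ) ≤ 2 * |Real.sin (θ / 2)| := by positivity
  nlinarith [hsq]

lemma four_dist_le (x : ℝ) : 4 * |x - (round x : ℤ)| ≤ 2 * |Real.sin (Real.pi * x)| := by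
  set t : ℝ := x - (round x : ℤ) with ht
  have habs : |Real.sin (Real.pi * t)| = |Real.sin (Real.pi * x)| := by
    have h0 : Real.sin (Real.pi * x - (round x : ℤ) * Real.pi)
        = (-1)^(round x) * Real.sin (Real.pi * x) := Real.sin_sub_int_mul_pi _ _
    have ht' : Real.pi * t = Real.pi * x - (round x : ℤ) * Real.pi := by rw [ht]; ring
    rw [ht', h0, abs_mul]
    rcases Int.even_or_odd (round x) with he | ho
    · rw [he.neg_one_zpow]; simp
    · rw [Odd.neg_one_zpow ho]; simp
  have hhalf : |t| ≤ 1/2 := abs_sub_round x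
  have hπt : |Real.pi * t| ≤ Real.pi / 2 := by
    rw [abs_mul, abs_of_pos Real.pi_pos]
    nlinarith [Real.pi_pos]
  have hmul := Real.mul_abs_le_abs_sin hπt
  rw [abs_mul, abs_of_pos Real.pi_pos] at hmul
  have h2 : 2 * |t| ≤ |Real.sin (Real.pi * t)| := by
    have hπ := Real.pi_pos
    have : 2 / Real.pi * (Real.pi * |t|) = 2 * |t| := by field_simp
    linarith [hmul, this.symm.le]
  rw [← habs]
  linarith

/-- For a Diophantine irrational `α` with `‖qα‖ ≥ c/(q f(q))`, the level sets
`S_{k,H} = {1 ≤ h ≤ H : |1 − e(−2αh)| ≤ 2^{-k}}` satisfy `|S_{k,H}| ≲ H f(2H) 2^{-k} + 1`. -/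
theorem diophantine_level_set_bound (α : ℝ) (hirr : Irrational α)
    (f : ℕ → ℝ) (hf1 : ∀ q, 1 ≤ f q) (hfmono : Monotone f)
    (c : ℝ) (hc : 0 < c)
    (hdio : ∀ q : ℕ, 2 ≤ q →
      c / (q * f q) ≤ |(q : ℝ) * α - ((round ((q : ℝ) * α) : ℤ) : ℝ)|) :
    ∃ C : ℝ, 0 < C ∧ ∀ H : ℕ, 1 ≤ H → ∀ k : ℕ,
      (Set.ncard {h : ℕ | 1 ≤ h ∧ h ≤ H ∧
          ‖(1 - Complex.exp (-(2 * Real.pi * Complex.I) * (2 * α * h)) : ℂ)‖ ≤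
            (2 : ℝ) ^ (-(k : ℤ))} : ℝ) ≤
        C * ((H : ℝ) * f (2 * H) * (2 : ℝ) ^ (-(k : ℤ)) + 1) := by
  classical
  refine ⟨max c⁻¹ 1, lt_of_lt_of_le one_pos (le_max_right _ _), ?_⟩
  intro H hH k
  set ε : ℝ := (2:ℝ)^(-(k:ℤ)) with hεdef
  have hεpos : 0 < ε := by positivity
  have hfpos : 0 < f (2*H) := lt_of_lt_of_le one_pos (hf1 _)
  -- key estimate for members
  have key : ∀ h : ℕ,
      ‖(1 - Complex.exp (-(2 * Real.pi * Complex.I) * (2 * α * h)) : ℂ)‖ ≤ ε →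
      |2*α*(h:ℝ) - (round (2*α*(h:ℝ)) : ℤ)| ≤ ε/4 := by
    intro h hh
    set x : ℝ := 2*α*(h:ℝ) with hx
    have harg : -(2 * Real.pi * Complex.I) * (2 * (α:ℂ) * (h:ℂ))
        = ((-(2*Real.pi*x) : ℝ) : ℂ) * Complex.I := by
      push_cast [hx]; ring
    rw [harg, abs_one_sub_exp_eq] at hh
    have hsin : |Real.sin (-(2*Real.pi*x)/2)| = |Real.sin (Real.pi * x)| := by
      rw [show -(2*Real.pi*x)/2 = -(Real.pi * x) by ring, Real.sin_neg, abs_neg]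
    have h4 := four_dist_le x
    rw [hsin] at hh
    linarith
  -- separation
  set δ : ℝ := c / (f (2*H) * ε) with hδdef
  have hδpos : 0 < δ := by positivity
  have sep : ∀ h₁ h₂ : ℕ, 1 ≤ h₁ → h₂ ≤ H → h₁ < h₂ →
      |2*α*(h₁:ℝ) - (round (2*α*(h₁:ℝ)) : ℤ)| ≤ ε/4 →
      |2*α*(h₂:ℝ) - (round (2*α*(h₂:ℝ)) : ℤ)| ≤ ε/4 →
      δ ≤ (h₂:ℝ) - (h₁:ℝ) := by
    intro h₁ h₂ h1le h2le hlt e1 e2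
    set d : ℕ := h₂ - h₁ with hd
    have hdpos : 1 ≤ d := Nat.le_sub_of_add_le (by omega)
    have hdcast : (d:ℝ) = (h₂:ℝ) - (h₁:ℝ) := by
      rw [hd]; push_cast [Nat.cast_sub hlt.le]; ring
    set q : ℕ := 2*d with hq
    have hq2 : 2 ≤ q := by omega
    have hqα : (q:ℝ)*α = 2*α*(h₂:ℝ) - 2*α*(h₁:ℝ) := by
      push_cast [hq, hdcast]
      ring
    have hround : |(q:ℝ)*α - (round ((q:ℝ)*α) : ℤ)| ≤ ε/2 := by
      have hle := round_le ((q:ℝ)*α) (round (2*α*(h₂:ℝ)) - round (2*α*(h₁:ℝ)))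
      have : |(q:ℝ)*α - ((round (2*α*(h₂:ℝ)) - round (2*α*(h₁:ℝ)) : ℤ) : ℝ)| ≤ ε/2 := by
        rw [hqα]
        push_cast
        have : 2*α*(h₂:ℝ) - 2*α*(h₁:ℝ) -
            (((round (2*α*(h₂:ℝ)) : ℤ):ℝ) - ((round (2*α*(h₁:ℝ)) : ℤ):ℝ))
          = (2*α*(h₂:ℝ) - (round (2*α*(h₂:ℝ)) : ℤ)) - (2*α*(h₁:ℝ) - (round (2*α*(h₁:ℝ)) : ℤ)) := by
          ring
        rw [this]
        calc |_| ≤ _ := abs_sub _ _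
        _ ≤ ε/2 := by linarith
      linarith [hle, this]
    have hdio' := hdio q hq2
    have hqfpos : (0:ℝ) < (q:ℝ) * f q := by
      have : (0:ℝ) < (q:ℝ) := by positivity
      exact mul_pos this (lt_of_lt_of_le one_pos (hf1 q))
    have hcle : c ≤ ε/2 * ((q:ℝ) * f q) := by
      rw [div_le_iff₀ hqfpos] at hdio'
      calc c ≤ |(q:ℝ)*α - (round ((q:ℝ)*α) : ℤ)| * ((q:ℝ) * f q) := hdio'
      _ ≤ ε/2 * ((q:ℝ) * f q) := by
        apply mul_le_mul_of_nonneg_right hround hqfpos.le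
    have hfq : f q ≤ f (2*H) := hfmono (by omega)
    have hcd : c ≤ ε * (d:ℝ) * f (2*H) := by
      have h1 : ε/2 * ((q:ℝ) * f q) = ε * (d:ℝ) * f q := by
        rw [hq]; push_cast; ring
      have h2 : ε * (d:ℝ) * f q ≤ ε * (d:ℝ) * f (2*H) := by
        apply mul_le_mul_of_nonneg_left hfq
        positivity
      linarith
    rw [hδdef, div_le_iff₀ (by positivity), ← hdcast]
    nlinarith
  -- finite set as Finset
  set P : ℕ → Prop := fun h =>
    ‖(1 - Complex.exp (-(2 * Real.pi * Complex.I) * (2 * α * h)) : ℂ)‖ ≤ ε with hP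
  set T : Finset ℕ := (Finset.Icc 1 H).filter P with hT
  have hST : {h : ℕ | 1 ≤ h ∧ h ≤ H ∧ P h} = ↑T := by
    ext h; simp [hT, Finset.mem_Icc, and_assoc]
  rw [show {h : ℕ | 1 ≤ h ∧ h ≤ H ∧
      ‖(1 - Complex.exp (-(2 * Real.pi * Complex.I) * (2 * α * h)) : ℂ)‖ ≤
      (2:ℝ)^(-(k:ℤ))} = {h : ℕ | 1 ≤ h ∧ h ≤ H ∧ P h} from rfl, hST,
    Set.ncard_coe_finset]
  -- counting via floor map
  set g : ℕ → ℕ := fun h => ⌊((h:ℝ)-1)/δ⌋₊ with hg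
  set M : ℕ := ⌊((H:ℝ)-1)/δ⌋₊ with hM
  have hmem : ∀ h ∈ T, 1 ≤ h ∧ h ≤ H ∧ P h := by
    intro h hh
    rw [hT, Finset.mem_filter, Finset.mem_Icc] at hh
    tauto
  have hmaps : ∀ h ∈ T, g h ∈ Finset.range (M+1) := by
    intro h hh
    obtain ⟨h1, h2, _⟩ := hmem h hh
    rw [Finset.mem_range, Nat.lt_succ_iff, hg, hM]
    apply Nat.floor_le_floor
    have hhH : ((h:ℝ)-1) ≤ ((H:ℝ)-1) := by
      have : (h:ℝ) ≤ (H:ℝ) := Nat.cast_le.mpr h2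
      linarith
    gcongr
  have hinj : Set.InjOn g ↑T := by
    intro a ha b hb hab
    by_contra hne
    wlog hlt : a < b generalizing a b
    · exact this hb ha hab.symm (Ne.symm hne) (by omega)
    obtain ⟨a1, a2, aP⟩ := hmem a ha
    obtain ⟨b1, b2, bP⟩ := hmem b hb
    have hsep := sep a b a1 b2 hlt (key a aP) (key b bP)
    have ha0 : (0:ℝ) ≤ ((a:ℝ)-1)/δ := by
      apply div_nonneg _ hδpos.le
      have : (1:ℝ) ≤ (a:ℝ) := by exact_mod_cast a1
      linarith
    have hstep : ((a:ℝ)-1)/δ + 1 ≤ ((b:ℝ)-1)/δ := by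
      have h1 : ((b:ℝ)-1)/δ - ((a:ℝ)-1)/δ = ((b:ℝ)-(a:ℝ))/δ := by ring
      have h2 : (1:ℝ) ≤ ((b:ℝ)-(a:ℝ))/δ := (one_le_div hδpos).mpr hsep
      linarith
    have : g a + 1 ≤ g b := by
      rw [hg]
      calc ⌊((a:ℝ)-1)/δ⌋₊ + 1 = ⌊((a:ℝ)-1)/δ + 1⌋₊ := (Nat.floor_add_one ha0).symm
      _ ≤ ⌊((b:ℝ)-1)/δ⌋₊ := Nat.floor_le_floor hstep
    omega
  have hcard : T.card ≤ M + 1 := by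
    have := Finset.card_le_card_of_injOn g hmaps (by
      intro a ha b hb; exact hinj (by exact_mod_cast ha) (by exact_mod_cast hb))
    simpa using this
  -- final arithmetic
  have hMle : (M:ℝ) ≤ ((H:ℝ)-1)/δ := by
    rw [hM]
    apply Nat.floor_le
    apply div_nonneg _ hδpos.le
    have : (1:ℝ) ≤ (H:ℝ) := by exact_mod_cast hH
    linarith
  have hδval : ((H:ℝ)-1)/δ ≤ (H:ℝ) * f (2*H) * ε / c := by
    rw [hδdef, div_div_eq_mul_div]
    have hnum : ((H:ℝ)-1) * (f (2*H) * ε) ≤ (H:ℝ) * f (2*H) * ε := by nlinarith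
    exact (div_le_div_iff_of_pos_right hc).mpr hnum
  have hXnn : (0:ℝ) ≤ (H:ℝ) * f (2*H) * ε := by positivity
  have hC1 : (1:ℝ) ≤ max c⁻¹ 1 := le_max_right _ _
  have hCc : c⁻¹ ≤ max c⁻¹ 1 := le_max_left _ _
  have hfinal : ((M:ℝ) + 1) ≤ max c⁻¹ 1 * ((H:ℝ) * f (2*H) * ε + 1) := by
    have h1 : (H:ℝ) * f (2*H) * ε / c = c⁻¹ * ((H:ℝ) * f (2*H) * ε) := by
      rw [div_eq_inv_mul]
    have h2 : c⁻¹ * ((H:ℝ) * f (2*H) * ε) ≤ max c⁻¹ 1 * ((H:ℝ) * f (2*H) * ε) :=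
      mul_le_mul_of_nonneg_right hCc hXnn
    nlinarith [hMle, hδval]
  calc (T.card : ℝ) ≤ ((M:ℝ) + 1) := by exact_mod_cast hcard
  _ ≤ max c⁻¹ 1 * ((H:ℝ) * f (2*H) * ε + 1) := hfinal
end

section
/- Let ρ : ℂ → (0,∞) be a radial C¹ function with ρ'(r) → 0 as r → ∞, and define the distance d_ρ(z₁,z₂) = inf_ℓ ∫_ℓ |dw|/ρ(w) over C¹ curves ℓ joining z₁ to z₂. Fix ε ∈ (0, 1/(6C)] for a constant C ≥ 1, and suppose |ρ'(r)| ≤ ε and ρ(r) ≤ εr for all r ≥ r(ε). Then for any w with |w| ≥ 2r(ε) and any z, z' in the closed disk of radius Cρ(w) about w: (1/(1+3Cε)) · |z−z'|/ρ(w) ≤ d_ρ(z, z') ≤ (1/(1−Cε)) · |z−z'|/ρ(w). -/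
open Filter

/-- The distance `d_ρ(z₁,z₂) = inf_ℓ ∫_ℓ |dw|/ρ(w)` over `C¹` curves joining `z₁` to `z₂`. -/
noncomputable def dRho (ρ : ℂ → ℝ) (z₁ z₂ : ℂ) : ℝ :=
  ⨅ ℓ : {ℓ : ℝ → ℂ // ContDiff ℝ 1 ℓ ∧ ℓ 0 = z₁ ∧ ℓ 1 = z₂},
    ∫ t in (0 : ℝ)..1, ‖deriv ℓ.1 t‖ / ρ (ℓ.1 t)

/-- Local comparison of the conformal metric `|dw|/ρ(w)` with the rescaled Euclidean
metric: for `|w| ≥ 2r(ε)` and `z, z'` in the closed disk of radius `Cρ(w)` about `w`,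
`(1+3Cε)⁻¹ |z−z'|/ρ(w) ≤ d_ρ(z,z') ≤ (1−Cε)⁻¹ |z−z'|/ρ(w)`. -/
theorem dRho_comparable_euclidean (g : ℝ → ℝ) (hgC1 : ContDiff ℝ 1 g)
    (hgpos : ∀ r, 0 < g r) (hg'0 : Tendsto (deriv g) atTop (nhds 0))
    (C ε rε : ℝ) (hC : 1 ≤ C) (hε : 0 < ε) (hεC : ε ≤ 1 / (6 * C))
    (hg' : ∀ r, rε ≤ r → |deriv g r| ≤ ε)
    (hglin : ∀ r, rε ≤ r → g r ≤ ε * r) :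
    ∀ w : ℂ, 2 * rε ≤ ‖w‖ →
      ∀ z z' : ℂ, ‖z - w‖ ≤ C * g (‖w‖) →
        ‖z' - w‖ ≤ C * g (‖w‖) →
        (1 / (1 + 3 * C * ε)) * ‖z - z'‖ / g (‖w‖) ≤
            dRho (fun u => g (‖u‖)) z z' ∧
          dRho (fun u => g (‖u‖)) z z' ≤
            (1 / (1 - C * ε)) * ‖z - z'‖ / g (‖w‖) := by
  intro w hw z z' hz hz'
  have haw0 : (0:ℝ) ≤ ‖w‖ := norm_nonneg w
  set aw : ℝ := ‖w‖ with haw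
  set gw : ℝ := g aw with hgwdef
  have hgw : 0 < gw := hgpos aw
  have hC0 : (0:ℝ) < C := lt_of_lt_of_le one_pos hC
  have hCε : 6 * C * ε ≤ 1 := by
    have h6 : (0:ℝ) < 6 * C := by positivity
    have := (le_div_iff₀ h6).mp hεC
    linarith
  have hrw : rε ≤ aw := by nlinarith
  have hlin : gw ≤ ε * aw := hglin _ hrw
  have h3C : 3 * C * gw ≤ aw / 2 := by nlinarith
  -- MVT estimate
  have key : ∀ u : ℂ, ‖u - w‖ ≤ 3 * C * gw →
      |g (‖u‖) - gw| ≤ ε * ‖u - w‖ := by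
    intro u hu
    have h1 : |‖u‖ - aw| ≤ ‖u - w‖ := by
      simpa [haw] using abs_norm_sub_norm_le u w
    have hru : rε ≤ ‖u‖ := by
      have := abs_le.1 h1
      nlinarith [this.1]
    have hmvt := Convex.norm_image_sub_le_of_norm_deriv_le (f := g) (s := Set.Ici rε)
      (fun x _ => (hgC1.differentiable one_ne_zero).differentiableAt)
      (fun x hx => by simpa [Real.norm_eq_abs] using hg' x hx)
      (convex_Ici rε) (Set.mem_Ici.2 hrw) (Set.mem_Ici.2 hru)
    calc |g (‖u‖) - gw| ≤ ε * |‖u‖ - aw| := by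
          simpa [Real.norm_eq_abs, hgwdef] using hmvt
      _ ≤ ε * ‖u - w‖ := by
          exact mul_le_mul_of_nonneg_left h1 hε.le
  have hub : ∀ u : ℂ, ‖u - w‖ ≤ 3 * C * gw →
      g (‖u‖) ≤ (1 + 3 * C * ε) * gw := by
    intro u hu
    have h1 := (abs_le.1 (key u hu)).2
    nlinarith
  have hlb : ∀ u : ℂ, ‖u - w‖ ≤ C * gw →
      (1 - C * ε) * gw ≤ g (‖u‖) := by
    intro u hu
    have hu3 : ‖u - w‖ ≤ 3 * C * gw := by nlinarith
    have h1 := (abs_le.1 (key u hu3)).1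
    nlinarith
  -- the straight segment
  set ℓ₀ : ℝ → ℂ := fun t => z + (t : ℂ) * (z' - z) with hℓ₀
  have hℓ₀C : ContDiff ℝ 1 ℓ₀ :=
    contDiff_const.add ((Complex.ofRealCLM.contDiff.of_le le_top).mul contDiff_const)
  have h00 : ℓ₀ 0 = z := by simp [hℓ₀]
  have h11 : ℓ₀ 1 = z' := by simp [hℓ₀]
  have hd0 : ∀ t : ℝ, HasDerivAt ℓ₀ (z' - z) t := by
    intro t
    simpa [hℓ₀] using ((Complex.ofRealCLM.hasDerivAt (x := t)).mul_const (z' - z)).const_add z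
  -- continuity of integrands
  have hcont : ∀ (ℓ : ℝ → ℂ), ContDiff ℝ 1 ℓ →
      Continuous (fun t => ‖deriv ℓ t‖ / g (‖ℓ t‖)) := by
    intro ℓ hℓ
    exact ((hℓ.continuous_deriv le_rfl).norm).div
      (hgC1.continuous.comp (continuous_norm.comp hℓ.continuous))
      (fun t => (hgpos _).ne')
  have hnn : ∀ ℓ : {ℓ : ℝ → ℂ // ContDiff ℝ 1 ℓ ∧ ℓ 0 = z ∧ ℓ 1 = z'},
      0 ≤ ∫ t in (0:ℝ)..1, ‖deriv ℓ.1 t‖ / g (‖ℓ.1 t‖) := fun ℓ =>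
    intervalIntegral.integral_nonneg zero_le_one
      (fun t _ => div_nonneg (norm_nonneg _) (hgpos _).le)
  haveI : Nonempty {ℓ : ℝ → ℂ // ContDiff ℝ 1 ℓ ∧ ℓ 0 = z ∧ ℓ 1 = z'} :=
    ⟨⟨ℓ₀, hℓ₀C, h00, h11⟩⟩
  constructor
  · -- lower bound
    set M : ℝ := (1 + 3 * C * ε) * gw with hM
    have hM0 : 0 < M := by
      rw [hM]
      nlinarith [mul_nonneg (mul_nonneg hC0.le hε.le) hgw.le]
    have habs2 : ‖z - z'‖ ≤ 2 * C * gw := by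
      have he : z - z' = (z - w) + (w - z') := by ring
      have h1 : ‖z - z'‖ ≤ ‖z - w‖ + ‖w - z'‖ := by
        rw [he]; exact norm_add_le _ _
      have h2 : ‖w - z'‖ = ‖z' - w‖ := by
        rw [norm_sub_rev]
      linarith
    have hgoal : (1 / (1 + 3 * C * ε)) * ‖z - z'‖ / gw
        = ‖z - z'‖ / M := by
      rw [hM]
      have h1 : (1:ℝ) + 3 * C * ε ≠ 0 := by nlinarith
      field_simp
    rw [hgoal]
    apply le_ciInf
    rintro ⟨ℓ, hℓC, hℓz, hℓz'⟩
    show ‖z - z'‖ / M ≤ ∫ t in (0:ℝ)..1, ‖deriv ℓ t‖ / g (‖ℓ t‖)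
    set F : ℂ → ℝ := fun u => max 0 (2 * C * gw - ‖u - z'‖) / M with hF
    set φ : ℝ → ℝ := fun t => F (ℓ t) with hφ
    set h : ℝ → ℝ := fun t => ‖deriv ℓ t‖ / g (‖ℓ t‖) with hh
    have hhc : Continuous h := hcont ℓ hℓC
    have hhnn : ∀ t, 0 ≤ h t := fun t => div_nonneg (norm_nonneg _) (hgpos _).le
    have hFlip : ∀ u v : ℂ, |F u - F v| ≤ ‖u - v‖ / M := by
      intro u v
      rw [hF]
      simp only
      rw [div_sub_div_same, abs_div, abs_of_pos hM0]
      refine (div_le_div_iff_of_pos_right hM0).2 ?_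
      have h1 : |max 0 (2*C*gw - ‖u - z'‖) - max 0 (2*C*gw - ‖v - z'‖)|
          ≤ |(2*C*gw - ‖u - z'‖) - (2*C*gw - ‖v - z'‖)| := by
        rw [max_comm 0 (2*C*gw - ‖u - z'‖),
          max_comm 0 (2*C*gw - ‖v - z'‖)]
        exact abs_max_sub_max_le_abs _ _ _
      refine h1.trans ?_
      have h2 : |‖u - z'‖ - ‖v - z'‖| ≤ ‖u - v‖ := by
        have := abs_norm_sub_norm_le (u - z') (v - z')
        have e : u - z' - (v - z') = u - v := by ring
        rwa [e] at this
      calc |(2*C*gw - ‖u - z'‖) - (2*C*gw - ‖v - z'‖)|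
          = |‖v - z'‖ - ‖u - z'‖| := by ring_nf
        _ ≤ ‖u - v‖ := by rw [abs_sub_comm]; exact h2
    have hF0 : ∀ u : ℂ, 2 * C * gw ≤ ‖u - z'‖ → F u = 0 := by
      intro u hu
      rw [hF]
      simp only
      rw [max_eq_left (by linarith), zero_div]
    have hF0' : ∀ u : ℂ, 3 * C * gw ≤ ‖u - w‖ → F u = 0 := by
      intro u hu
      apply hF0
      have he : u - w = (u - z') + (z' - w) := by ring
      have h1 : ‖u - w‖ ≤ ‖u - z'‖ + ‖z' - w‖ := by
        rw [he]; exact norm_add_le _ _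
      linarith
    have hFc : Continuous F := by
      rw [hF]
      exact (continuous_const.max (continuous_const.sub
        (continuous_norm.comp (continuous_id.sub continuous_const)))).div_const M
    have hφc : Continuous φ := hFc.comp hℓC.continuous
    have hBd : ∀ x : ℝ, HasDerivAt (fun t => φ 0 + ∫ s in (0:ℝ)..t, h s) (h x) x := by
      intro x
      exact HasDerivAt.const_add (φ 0) (intervalIntegral.integral_hasDerivAt_right
        (hhc.intervalIntegrable _ _)
        hhc.aestronglyMeasurable.stronglyMeasurableAtFilter hhc.continuousAt)
    have hslope : ∀ x ∈ Set.Ico (0:ℝ) 1, ∀ r, h x < r →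
        ∃ᶠ y in nhdsWithin x (Set.Ioi x), slope φ x y < r := by
      intro x _ r hr
      rcases le_or_gt (‖ℓ x - w‖) (3 * C * gw) with hcase | hcase
      · have hgle : g (‖ℓ x‖) ≤ M := by rw [hM]; exact hub _ hcase
        have hdl : HasDerivAt ℓ (deriv ℓ x) x := ((hℓC.differentiable one_ne_zero) x).hasDerivAt
        have h1 : Tendsto (fun y => ‖slope ℓ x y‖ / M) (nhdsWithin x (Set.Ioi x))
            (nhds (‖deriv ℓ x‖ / M)) := by
          have := ((hasDerivAt_iff_tendsto_slope.1 hdl).norm).div_const M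
          exact this.mono_left (nhdsWithin_mono x (fun y (hy : x < y) => hy.ne'))
        have h2 : ‖deriv ℓ x‖ / M < r := by
          refine lt_of_le_of_lt ?_ hr
          rw [hh]
          exact div_le_div_of_nonneg_left (norm_nonneg _) (hgpos _) hgle
        have h3 : ∀ᶠ y in nhdsWithin x (Set.Ioi x), ‖slope ℓ x y‖ / M < r :=
          h1.eventually_lt_const h2
        have h4 : ∀ᶠ y in nhdsWithin x (Set.Ioi x), slope φ x y ≤ ‖slope ℓ x y‖ / M := by
          filter_upwards [self_mem_nhdsWithin] with y hy
          have hyx : (0:ℝ) < y - x := sub_pos.2 hy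
          rw [slope_def_field]
          have e1 : ‖slope ℓ x y‖ = ‖ℓ y - ℓ x‖ / (y - x) := by
            rw [slope, vsub_eq_sub, norm_smul, norm_inv, Real.norm_eq_abs, abs_of_pos hyx,
              inv_mul_eq_div]
          rw [e1]
          calc (φ y - φ x) / (y - x) ≤ |φ y - φ x| / (y - x) :=
              (div_le_div_iff_of_pos_right hyx).2 (le_abs_self _)
            _ ≤ (‖ℓ y - ℓ x‖ / M) / (y - x) :=
              (div_le_div_iff_of_pos_right hyx).2 (hFlip _ _)
            _ = ‖ℓ y - ℓ x‖ / (y - x) / M := by ring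
        refine ((h3.and h4).mono ?_).frequently
        rintro y ⟨hy1, hy2⟩
        exact lt_of_le_of_lt hy2 hy1
      · have hc2 : Tendsto (fun y => ‖ℓ y - w‖) (nhdsWithin x (Set.Ioi x))
            (nhds (‖ℓ x - w‖)) :=
          ((continuous_norm.comp (hℓC.continuous.sub continuous_const)).tendsto x).mono_left
            nhdsWithin_le_nhds
        have hev : ∀ᶠ y in nhdsWithin x (Set.Ioi x), 3 * C * gw < ‖ℓ y - w‖ :=
          hc2.eventually_const_lt hcase
        refine (hev.mono ?_).frequently
        intro y hy
        have hφy : φ y = 0 := hF0' _ hy.le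
        have hφx : φ x = 0 := hF0' _ hcase.le
        rw [slope_def_field, hφy, hφx]
        simpa using lt_of_le_of_lt (hhnn x) hr
    have hmain : φ 1 ≤ φ 0 + ∫ s in (0:ℝ)..1, h s := by
      have := image_le_of_liminf_slope_right_le_deriv_boundary (f := φ)
        (B := fun t => φ 0 + ∫ s in (0:ℝ)..t, h s) (B' := h) (a := 0) (b := 1)
        hφc.continuousOn (by simp)
        (continuous_iff_continuousAt.2 fun x => (hBd x).continuousAt).continuousOn
        (fun x _ => (hBd x).hasDerivWithinAt) hslope
      simpa using this (Set.right_mem_Icc.2 zero_le_one)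
    have hφ1 : φ 1 = 2 * C * gw / M := by
      rw [hφ]
      simp only [hℓz', hF, sub_self, norm_zero, sub_zero]
      rw [max_eq_right (by positivity)]
    have hφ0 : φ 0 = (2 * C * gw - ‖z - z'‖) / M := by
      rw [hφ]
      simp only [hℓz, hF]
      rw [max_eq_right (by linarith)]
    have e : 2*C*gw/M - (2*C*gw - ‖z - z'‖)/M = ‖z - z'‖/M := by
      ring
    rw [hφ1, hφ0] at hmain
    linarith
  · -- upper bound
    have hseg : ∀ t ∈ Set.Icc (0:ℝ) 1, ‖ℓ₀ t - w‖ ≤ C * gw := by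
      intro t ht
      have he : ℓ₀ t - w = ((1 - t : ℝ) : ℂ) * (z - w) + (t : ℂ) * (z' - w) := by
        simp only [hℓ₀]; push_cast; ring
      rw [he]
      calc ‖((1 - t : ℝ) : ℂ) * (z - w) + (t : ℂ) * (z' - w)‖
          ≤ ‖((1 - t : ℝ) : ℂ) * (z - w)‖ + ‖(t : ℂ) * (z' - w)‖ :=
            norm_add_le _ _
        _ = (1 - t) * ‖z - w‖ + t * ‖z' - w‖ := by
            rw [norm_mul, norm_mul, Complex.norm_real, Complex.norm_real, Real.norm_eq_abs, Real.norm_eq_abs,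
              abs_of_nonneg (by linarith [ht.2]), abs_of_nonneg ht.1]
        _ ≤ C * gw := by nlinarith [ht.1, ht.2, norm_nonneg (z - w), norm_nonneg (z' - w)]
    have hbdd : BddBelow (Set.range fun ℓ : {ℓ : ℝ → ℂ // ContDiff ℝ 1 ℓ ∧ ℓ 0 = z ∧ ℓ 1 = z'} =>
        ∫ t in (0:ℝ)..1, ‖deriv ℓ.1 t‖ / g (‖ℓ.1 t‖)) := by
      refine ⟨0, ?_⟩
      rintro x ⟨ℓ, rfl⟩
      exact hnn ℓ
    have hle := ciInf_le hbdd (⟨ℓ₀, hℓ₀C, h00, h11⟩ :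
      {ℓ : ℝ → ℂ // ContDiff ℝ 1 ℓ ∧ ℓ 0 = z ∧ ℓ 1 = z'})
    refine le_trans (by exact hle) ?_
    have hpos : (0:ℝ) < (1 - C * ε) * gw := by nlinarith
    have hderiv : ∀ t : ℝ, deriv ℓ₀ t = z' - z := fun t => (hd0 t).deriv
    have hintle : (∫ t in (0:ℝ)..1, ‖deriv ℓ₀ t‖ / g (‖ℓ₀ t‖))
        ≤ ∫ _t in (0:ℝ)..1, ‖z - z'‖ / ((1 - C * ε) * gw) := by
      apply intervalIntegral.integral_mono_on zero_le_one
        ((hcont ℓ₀ hℓ₀C).intervalIntegrable _ _) intervalIntegrable_const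
      intro t ht
      rw [hderiv]
      have hnz : ‖z' - z‖ = ‖z - z'‖ := by
        rw [norm_sub_rev]
      rw [hnz]
      exact div_le_div_of_nonneg_left (norm_nonneg _) hpos (hlb _ (hseg t ht))
    refine le_trans hintle ?_
    rw [intervalIntegral.integral_const]
    simp only [sub_zero, one_smul]
    have h1 : (1:ℝ) - C * ε ≠ 0 := by nlinarith
    have h2 : gw ≠ 0 := hgw.ne'
    apply le_of_eq
    field_simp
end

section
/- Let W ⊆ ℂ, and for w ∈ W let D_w denote the open disk of center w and radius ρ(w), where ρ is a radial gauge with |ρ'| ≤ ε and ρ(r) ≤ εr for r ≥ r(ε), with 0 < ε < 1/20 and min{|w| : w ∈ W} ≥ 2r(ε). Let W̃ ⊆ W be a maximal subset such that the closed disks (1/2)·D̄_w, w ∈ W̃, are pairwise disjoint. Then: (i) ∪_{w ∈ W} D_w ⊆ ∪_{w̃ ∈ W̃} 2.5·D_{w̃}; and (ii) the closed disks {10·D̄_w : w ∈ W̃} cover each point of ℂ at most 3²·21² times. -/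
open Metric Set MeasureTheory

-- Lipschitz estimate from deriv bound on Ici
lemma lip_aux (g : ℝ → ℝ) (hgC1 : ContDiff ℝ 1 g) (ε rε : ℝ)
    (hg' : ∀ r, rε ≤ r → |deriv g r| ≤ ε) :
    ∀ a b : ℝ, rε ≤ a → rε ≤ b → |g a - g b| ≤ ε * |a - b| := by
  intro a b ha hb
  have := Convex.norm_image_sub_le_of_norm_deriv_le (s := Set.Ici rε) (f := g)
    (fun x _ => (hgC1.differentiable one_ne_zero).differentiableAt)
    (fun x hx => by rw [Real.norm_eq_abs]; exact hg' x hx) (convex_Ici rε) hb ha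
  simpa [Real.norm_eq_abs] using this

-- disjoint closed balls with positive radii are far apart
lemma dist_gt_of_disjoint {w w' : ℂ} {r1 r2 : ℝ} (h1 : 0 < r1) (h2 : 0 < r2)
    (hd : Disjoint (Metric.closedBall w r1) (Metric.closedBall w' r2)) :
    r1 + r2 < dist w w' := by
  by_contra h
  push_neg at h
  have hs : (0:ℝ) < r1 + r2 := by linarith
  set x : ℂ := w + (r1 / (r1 + r2)) • (w' - w) with hx
  have hxw : dist x w ≤ r1 := by
    have : x - w = (r1 / (r1 + r2)) • (w' - w) := by rw [hx]; ring_nf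
    rw [dist_eq_norm, this, norm_smul, Real.norm_eq_abs,
      abs_of_nonneg (by positivity)]
    have hnorm : ‖w' - w‖ ≤ r1 + r2 := by
      rw [← dist_eq_norm, dist_comm]; exact h
    calc r1 / (r1 + r2) * ‖w' - w‖ ≤ r1 / (r1 + r2) * (r1 + r2) := by
          apply mul_le_mul_of_nonneg_left hnorm (by positivity)
      _ = r1 := by field_simp
  have hxw' : dist x w' ≤ r2 := by
    have : x - w' = -((r2 / (r1 + r2)) • (w' - w)) := by
      rw [hx]
      have : (r1 / (r1 + r2)) = 1 - (r2 / (r1 + r2)) := by field_simp; ring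
      rw [this, sub_smul, one_smul]
      ring_nf
    rw [dist_eq_norm, this, norm_neg, norm_smul, Real.norm_eq_abs,
      abs_of_nonneg (by positivity)]
    have hnorm : ‖w' - w‖ ≤ r1 + r2 := by
      rw [← dist_eq_norm, dist_comm]; exact h
    calc r2 / (r1 + r2) * ‖w' - w‖ ≤ r2 / (r1 + r2) * (r1 + r2) := by
          apply mul_le_mul_of_nonneg_left hnorm (by positivity)
      _ = r2 := by field_simp
  exact Set.disjoint_left.mp hd (Metric.mem_closedBall.2 hxw) (Metric.mem_closedBall.2 hxw')

-- packing bound via area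
lemma packing_aux (z : ℂ) (r R : ℝ) (hr : 0 < r) (t : Finset ℂ)
    (hsub : ∀ w ∈ t, Metric.ball w r ⊆ Metric.ball z R)
    (hdisj : (t : Set ℂ).Pairwise (Function.onFun Disjoint fun w => Metric.ball w r)) :
    (t.card : ℝ) * r ^ 2 ≤ R ^ 2 := by
  have h1 : ∑ w ∈ t, volume (Metric.ball w r) ≤ volume (Metric.ball z R) := by
    rw [← MeasureTheory.measure_biUnion_finset hdisj (fun w _ => measurableSet_ball)]
    exact measure_mono (Set.iUnion₂_subset hsub)
  simp only [Complex.volume_ball, Finset.sum_const, nsmul_eq_mul] at h1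
  have hpi : (NNReal.pi : ENNReal) ≠ 0 := by
    simp [NNReal.pi_ne_zero]
  have hpit : (NNReal.pi : ENNReal) ≠ ⊤ := ENNReal.coe_ne_top
  have h2 : (t.card : ENNReal) * ENNReal.ofReal r ^ 2 ≤ ENNReal.ofReal R ^ 2 := by
    rw [← mul_assoc] at h1
    exact (ENNReal.mul_le_mul_iff_left hpi hpit).mp h1
  rcases le_or_gt 0 R with hR | hR
  · have h3 : ENNReal.ofReal ((t.card : ℝ) * r ^ 2) ≤ ENNReal.ofReal (R ^ 2) := by
      rw [ENNReal.ofReal_mul (by positivity), ENNReal.ofReal_natCast,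
        ENNReal.ofReal_pow hr.le, ENNReal.ofReal_pow hR]
      exact h2
    exact (ENNReal.ofReal_le_ofReal_iff (by positivity)).mp h3
  · rcases Finset.eq_empty_or_nonempty t with rfl | ⟨w, hw⟩
    · simpa using sq_nonneg R
    · exfalso
      have hballe : Metric.ball z R = ∅ := Metric.ball_eq_empty.2 hR.le
      have : w ∈ Metric.ball w r := Metric.mem_ball_self hr
      have := hsub w hw this
      rw [hballe] at this
      exact this

/-- The Vitali-type rarefying lemma: if `W̃ ⊆ W` is a maximal subset whose half-disks
`(1/2)D̄_w` are pairwise disjoint, then the disks `2.5·D_{w̃}`, `w̃ ∈ W̃`, cover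
`⋃_{w ∈ W} D_w`, while the disks `10·D̄_{w̃}` have multiplicity of covering at most
`3²·21²`. -/
theorem rarefying_lemma (g : ℝ → ℝ) (hgC1 : ContDiff ℝ 1 g) (hgpos : ∀ r, 0 < g r)
    (ε rε : ℝ) (hε0 : 0 < ε) (hε : ε < 1 / 20)
    (hg' : ∀ r, rε ≤ r → |deriv g r| ≤ ε)
    (hglin : ∀ r, rε ≤ r → g r ≤ ε * r)
    (W Wt : Set ℂ) (hWfar : ∀ w ∈ W, 2 * rε ≤ ‖w‖)
    (hsub : Wt ⊆ W)
    (hdisj : Wt.Pairwise fun w w' =>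
      Disjoint (Metric.closedBall w (g (‖w‖) / 2))
        (Metric.closedBall w' (g (‖w'‖) / 2)))
    (hmax : ∀ w ∈ W, ∃ w' ∈ Wt,
      ¬ Disjoint (Metric.closedBall w (g (‖w‖) / 2))
        (Metric.closedBall w' (g (‖w'‖) / 2))) :
    ((⋃ w ∈ W, Metric.ball w (g (‖w‖))) ⊆
        ⋃ w ∈ Wt, Metric.ball w (2.5 * g (‖w‖))) ∧
      ∀ z : ℂ, {w ∈ Wt | z ∈ Metric.closedBall w (10 * g (‖w‖))}.Finite ∧
        Set.ncard {w ∈ Wt | z ∈ Metric.closedBall w (10 * g (‖w‖))} ≤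
          3 ^ 2 * 21 ^ 2 := by
  have hlip := lip_aux g hgC1 ε rε hg'
  -- every element of W has modulus ≥ rε
  have hWr : ∀ w ∈ W, rε ≤ ‖w‖ := by
    intro w hw
    have h1 := hWfar w hw
    have h2 : (0:ℝ) ≤ ‖w‖ := norm_nonneg w
    linarith
  -- |‖w‖ - ‖w'‖| ≤ dist w w'
  have habs : ∀ w w' : ℂ, |‖w‖ - ‖w'‖| ≤ dist w w' := by
    intro w w'
    rw [dist_eq_norm]
    exact abs_norm_sub_norm_le w w'
  constructor
  · -- part (i)
    intro z hz
    simp only [Set.mem_iUnion] at hz ⊢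
    obtain ⟨w, hw, hzw⟩ := hz
    rw [Metric.mem_ball] at hzw
    obtain ⟨w', hw', hnd⟩ := hmax w hw
    obtain ⟨x, hx1, hx2⟩ := Set.not_disjoint_iff.mp hnd
    rw [Metric.mem_closedBall] at hx1 hx2
    have hww' : dist w w' ≤ g (‖w‖) / 2 + g (‖w'‖) / 2 :=
      calc dist w w' ≤ dist w x + dist x w' := dist_triangle w x w'
        _ ≤ g (‖w‖) / 2 + g (‖w'‖) / 2 := by
            rw [dist_comm w x]; exact add_le_add hx1 hx2
    have hcomp : |g (‖w‖) - g (‖w'‖)| ≤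
        ε * (g (‖w‖) / 2 + g (‖w'‖) / 2) := by
      calc |g (‖w‖) - g (‖w'‖)|
          ≤ ε * |‖w‖ - ‖w'‖| :=
            hlip _ _ (hWr w hw) (hWr w' (hsub hw'))
        _ ≤ ε * (g (‖w‖) / 2 + g (‖w'‖) / 2) :=
            mul_le_mul_of_nonneg_left ((habs w w').trans hww') hε0.le
    have hkey : g (‖w‖) ≤ (4/3) * g (‖w'‖) := by
      have h1 := (abs_le.mp hcomp).2
      have h2 := hgpos (‖w‖)
      have h3 := hgpos (‖w'‖)
      nlinarith
    refine ⟨w', hw', ?_⟩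
    rw [Metric.mem_ball]
    have : dist z w' ≤ dist z w + dist w w' := dist_triangle z w w'
    have h3 := hgpos (‖w'‖)
    nlinarith
  · -- part (ii)
    intro z
    set S := {w ∈ Wt | z ∈ Metric.closedBall w (10 * g (‖w‖))} with hS
    set az := ‖z‖ with haz
    have hgz := hgpos az
    -- comparability for members of S
    have hScomp : ∀ w ∈ S, (2/3) * g az ≤ g (‖w‖) ∧
        dist z w ≤ 20 * g az := by
      rintro w ⟨hwWt, hwz⟩
      rw [Metric.mem_closedBall] at hwz
      have hwW := hsub hwWt
      have haw : rε ≤ ‖w‖ := hWr w hwW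
      have haw0 : (0:ℝ) ≤ ‖w‖ := norm_nonneg w
      have hfar := hWfar w hwW
      have hglin' : g (‖w‖) ≤ ε * ‖w‖ := hglin _ haw
      have hgw := hgpos (‖w‖)
      -- dist z w ≤ |w| / 2
      have hdzw : dist z w ≤ ‖w‖ / 2 := by nlinarith
      -- |z| ≥ rε
      have hazr : rε ≤ az := by
        have h1 := (abs_le.mp (habs z w)).1
        have h2 : (0:ℝ) ≤ az := norm_nonneg z
        rw [haz]
        nlinarith
      have hc : |g (‖w‖) - g az| ≤ ε * (10 * g (‖w‖)) := by
        calc |g (‖w‖) - g az| ≤ ε * |‖w‖ - az| :=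
              hlip _ _ haw hazr
          _ ≤ ε * (10 * g (‖w‖)) := by
              apply mul_le_mul_of_nonneg_left _ hε0.le
              have := habs w z
              rw [dist_comm] at this
              calc |‖w‖ - az| ≤ dist z w := this
                _ ≤ 10 * g (‖w‖) := hwz
      have hc1 := (abs_le.mp hc).1
      have hc2 := (abs_le.mp hc).2
      constructor
      · nlinarith
      · nlinarith
    -- separation of points of S
    have hsep : ∀ w ∈ S, ∀ w' ∈ S, w ≠ w' →
        Disjoint (Metric.ball w (g az / 3)) (Metric.ball w' (g az / 3)) := by
      rintro w hw w' hw' hne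
      have hd := hdisj hw.1 hw'.1 hne
      have hlt := dist_gt_of_disjoint (by linarith [hgpos (‖w‖)])
        (by linarith [hgpos (‖w'‖)]) hd
      apply Metric.ball_disjoint_ball
      have h1 := (hScomp w hw).1
      have h2 := (hScomp w' hw').1
      linarith
    -- inclusion in a big ball
    have hincl : ∀ w ∈ S, Metric.ball w (g az / 3) ⊆ Metric.ball z (21 * g az) := by
      intro w hw x hx
      rw [Metric.mem_ball] at hx ⊢
      have h2 := (hScomp w hw).2
      calc dist x z ≤ dist x w + dist w z := dist_triangle x w z
        _ < g az / 3 + 20 * g az := by rw [dist_comm w z]; linarith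
        _ ≤ 21 * g az := by linarith
    -- cardinality bound for finite subsets
    have hcard : ∀ t : Finset ℂ, ↑t ⊆ S → t.card ≤ 3 ^ 2 * 21 ^ 2 := by
      intro t ht
      have := packing_aux z (g az / 3) (21 * g az) (by positivity) t
        (fun w hw => hincl w (ht hw))
        (fun w hw w' hw' hne => hsep w (ht hw) w' (ht hw') hne)
      have hsq : (0:ℝ) < (g az / 3) ^ 2 := by positivity
      have : (t.card : ℝ) ≤ 3 ^ 2 * 21 ^ 2 := by nlinarith
      exact_mod_cast this
    have hfin : S.Finite := by
      by_contra h
      obtain ⟨t, hts, htf, htc⟩ :=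
        Set.Infinite.exists_subset_ncard_eq h (3 ^ 2 * 21 ^ 2 + 1)
      have h1 := hcard htf.toFinset (by rwa [Set.Finite.coe_toFinset])
      rw [← Set.ncard_coe_finset htf.toFinset, Set.Finite.coe_toFinset, htc] at h1
      omega
    refine ⟨hfin, ?_⟩
    have h1 := hcard hfin.toFinset (by rw [Set.Finite.coe_toFinset])
    rwa [← Set.ncard_coe_finset hfin.toFinset, Set.Finite.coe_toFinset] at h1
end

section
/- Let (r_j)_{1≤j≤n} be independent Rademacher random variables and (b_j) ⊆ ℝ. Let α be a positive integer and suppose there is b > 0 such that for any two distinct index multisets {i₁,…,i_{α'}}, {j₁,…,j_{α''}} with α' + α'' ≤ 2α, one has |Σ_{t=1}^{α'} b_{i_t} − Σ_{t=1}^{α''} b_{j_t}| ≥ b. Then sup_{X ∈ ℝ} P[ |Σ_{j=1}^n r_j b_j − X| < b n^{-α} ] ≲_α n^{-α}. -/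
open MeasureTheory ProbabilityTheory ENNReal

/-- Halász-type anticoncentration lemma: if all signed short partial sums of the
coefficients `b_j` (over distinct index multisets of total size at most `2α`) are
`b`-separated, then `sup_X P[|Σ r_j b_j − X| < b n^{-α}] ≲_α n^{-α}` for Rademacher
random variables `r_j`. -/
theorem halasz_anticoncentration
    {Ω : Type*} [MeasurableSpace Ω] (μ : Measure Ω) [IsProbabilityMeasure μ]
    (α : ℕ) (hα : 0 < α) :
    ∃ C : ℝ, 0 < C ∧ ∀ n : ℕ, ∀ r : Fin n → Ω → ℝ, ∀ bc : Fin n → ℝ, ∀ b : ℝ,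
      0 < b →
      iIndepFun r μ →
      (∀ j, Measure.map (r j) μ =
        (1 / 2 : ℝ≥0∞) • Measure.dirac (1 : ℝ) + (1 / 2 : ℝ≥0∞) • Measure.dirac (-1 : ℝ)) →
      (∀ s t : Multiset (Fin n), s ≠ t → Multiset.card s + Multiset.card t ≤ 2 * α →
        b ≤ |(s.map bc).sum - (t.map bc).sum|) →
      ∀ X : ℝ,
        (μ {ω | |(∑ j, r j ω * bc j) - X| < b * (n : ℝ) ^ (-(α : ℤ))}).toReal ≤
          C * (n : ℝ) ^ (-(α : ℤ)) := by
  classical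
  refine ⟨(2 * α : ℝ) ^ α * α.factorial * 2 ^ α, by positivity, ?_⟩
  intro n r bc b hb hindep hmap hsep X
  rcases Nat.eq_zero_or_pos n with hn0 | hn
  · subst hn0
    have hz : ((0 : ℕ) : ℝ) ^ (-(α : ℤ)) = 0 := by
      rw [Nat.cast_zero, zero_zpow _ (by simp; omega)]
    have hset : {ω : Ω | |(∑ j : Fin 0, r j ω * bc j) - X| < b * ((0 : ℕ) : ℝ) ^ (-(α : ℤ))}
        = ∅ := by
      ext ω
      simp only [Set.mem_setOf_eq, Set.mem_empty_iff_false, iff_false, not_lt, hz, mul_zero]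
      exact abs_nonneg _
    rw [hset, hz]
    simp
  -- n ≥ 1
  have hn1 : (1 : ℝ) ≤ (n : ℝ) := by exact_mod_cast hn
  have hzle : ((n : ℝ)) ^ (-(α : ℤ)) ≤ 1 := zpow_le_one_of_nonpos₀ hn1 (by omega)
  have hzeq : ((n : ℝ)) ^ (-(α : ℤ)) = ((n : ℝ) ^ α)⁻¹ := by
    rw [zpow_neg, zpow_natCast]
  have hnpow : (0 : ℝ) < (n : ℝ) ^ α := by positivity
  -- a.e. measurability of the r j
  have hae : ∀ j, AEMeasurable (r j) μ := by
    intro j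
    by_contra h
    have h0 := hmap j
    rw [Measure.map_of_not_aemeasurable h] at h0
    have h1 := congrArg (fun m : Measure ℝ => m Set.univ) h0
    simp at h1
    rw [ENNReal.inv_two_add_inv_two] at h1
    exact zero_ne_one h1
  have hhalf : ∀ j, ∀ v : ℝ, v = 1 ∨ v = -1 → μ (r j ⁻¹' {v}) = 1 / 2 := by
    intro j v hv
    rw [← Measure.map_apply_of_aemeasurable (hae j) (measurableSet_singleton v), hmap j]
    rcases hv with rfl | rfl <;> simp [Measure.dirac_apply] <;> norm_num
  -- sign patterns
  set sgn : Bool → ℝ := fun s => if s then 1 else -1 with hsgn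
  set val : (Fin n → Bool) → ℝ := fun ε => ∑ j, sgn (ε j) * bc j with hval
  set A : Finset (Fin n → Bool) :=
    Finset.univ.filter (fun ε => |val ε - X| < b * (n : ℝ) ^ (-(α : ℤ))) with hA
  set E : (Fin n → Bool) → Set Ω := fun ε => ⋂ j, r j ⁻¹' {sgn (ε j)} with hE
  set N : Set Ω := ⋃ j, r j ⁻¹' ({1, -1} : Set ℝ)ᶜ with hN
  -- measure of each atom
  have hatom : ∀ ε : Fin n → Bool, μ (E ε) = (1 / 2 : ℝ≥0∞) ^ n := by
    intro ε
    rw [hE]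
    rw [hindep.meas_iInter (fun j => ⟨{sgn (ε j)}, measurableSet_singleton _, rfl⟩)]
    have h2 : ∀ j : Fin n, μ (r j ⁻¹' {sgn (ε j)}) = 1 / 2 := by
      intro j
      apply hhalf
      by_cases h : ε j <;> simp [hsgn, h]
    simp [h2]
  -- null set
  have hmeas2 : MeasurableSet (({1, -1} : Set ℝ)ᶜ) :=
    (Set.Finite.measurableSet (by simp)).compl
  have hnull : μ N = 0 := by
    rw [hN]
    refine measure_iUnion_null fun j => ?_
    rw [← Measure.map_apply_of_aemeasurable (hae j) hmeas2, hmap j]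
    simp [Measure.dirac_apply]
  -- inclusion of the event into good atoms ∪ null set
  have hincl : {ω | |(∑ j, r j ω * bc j) - X| < b * (n : ℝ) ^ (-(α : ℤ))} ⊆
      (⋃ ε ∈ A, E ε) ∪ N := by
    intro ω hω
    by_cases hgood : ∀ j, r j ω ∈ ({1, -1} : Set ℝ)
    · left
      set ε : Fin n → Bool := fun j => if r j ω = 1 then true else false with hε
      have hvals : ∀ j, r j ω = sgn (ε j) := by
        intro j
        by_cases h : r j ω = 1
        · simp [hε, h, hsgn]
        · rcases hgood j with h1 | h1
          · exact absurd h1 h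
          · simp only [Set.mem_singleton_iff] at h1
            simp only [hε, h1, hsgn]
            norm_num
      have hεA : ε ∈ A := by
        rw [hA]
        simp only [Finset.mem_filter, Finset.mem_univ, true_and]
        have hv : val ε = ∑ j, r j ω * bc j := by
          rw [hval]
          exact Finset.sum_congr rfl fun j _ => by rw [hvals j]
        rw [hv]
        exact hω
      have hωE : ω ∈ E ε := by
        rw [hE]
        exact Set.mem_iInter.mpr fun j => by simp [hvals j]
      exact Set.mem_biUnion hεA hωE
    · right
      push_neg at hgood
      obtain ⟨j, hj⟩ := hgood
      exact Set.mem_iUnion.mpr ⟨j, hj⟩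
  -- probability bound by counting
  have hle : μ {ω | |(∑ j, r j ω * bc j) - X| < b * (n : ℝ) ^ (-(α : ℤ))} ≤
      (A.card : ℝ≥0∞) * (1 / 2) ^ n := by
    calc μ {ω | |(∑ j, r j ω * bc j) - X| < b * (n : ℝ) ^ (-(α : ℤ))}
        ≤ μ ((⋃ ε ∈ A, E ε) ∪ N) := measure_mono hincl
      _ ≤ μ (⋃ ε ∈ A, E ε) + μ N := measure_union_le _ _
      _ = μ (⋃ ε ∈ A, E ε) := by rw [hnull, add_zero]
      _ ≤ ∑ ε ∈ A, μ (E ε) := measure_biUnion_finset_le _ _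
      _ = (A.card : ℝ≥0∞) * (1 / 2) ^ n := by
          simp [hatom, Finset.sum_const, mul_comm]
  -- separation: distinct patterns in A differ in more than 2α coordinates
  have hsepA : ∀ ε ∈ A, ∀ ε' ∈ A, ε ≠ ε' →
      2 * α < (Finset.univ.filter (fun j => ε j ≠ ε' j)).card := by
    intro ε hε ε' hε' hne
    by_contra hcon
    push_neg at hcon
    set D : Finset (Fin n) := Finset.univ.filter (fun j => ε j ≠ ε' j) with hD
    set s : Finset (Fin n) := D.filter (fun j => ε j = true) with hs
    set t : Finset (Fin n) := D.filter (fun j => ¬ (ε j = true)) with ht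
    have hcardst : s.card + t.card = D.card :=
      Finset.card_filter_add_card_filter_not _
    have hstne : s.val ≠ t.val := by
      intro h
      have hst : s = t := Finset.val_inj.mp h
      have hsempty : s = ∅ := by
        by_contra hne'
        obtain ⟨j, hj⟩ := Finset.nonempty_of_ne_empty hne'
        have hj' : j ∈ t := hst ▸ hj
        rw [hs] at hj
        rw [ht] at hj'
        exact (Finset.mem_filter.mp hj').2 (Finset.mem_filter.mp hj).2
      have hDempty : D = ∅ := by
        have h0 : s.card = 0 := by rw [hsempty]; rfl
        have h1 : t.card = 0 := by rw [← hst, hsempty]; rfl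
        exact Finset.card_eq_zero.mp (by omega)
      obtain ⟨j, hj⟩ := Function.ne_iff.mp hne
      have : j ∈ D := by rw [hD]; simp [hj]
      rw [hDempty] at this
      exact absurd this (Finset.notMem_empty j)
    have hdiff : val ε - val ε' =
        2 * ((s.val.map bc).sum - (t.val.map bc).sum) := by
      have h1 : val ε - val ε' = ∑ j, (sgn (ε j) - sgn (ε' j)) * bc j := by
        rw [hval]
        rw [← Finset.sum_sub_distrib]
        exact Finset.sum_congr rfl fun j _ => by ring
      have h2 : ∑ j, (sgn (ε j) - sgn (ε' j)) * bc j
          = ∑ j ∈ D, (sgn (ε j) - sgn (ε' j)) * bc j := by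
        refine (Finset.sum_filter_of_ne fun j _ hne' => ?_).symm
        intro hjD
        rw [hjD, sub_self, zero_mul] at hne'
        exact hne' rfl
      have h3 : ∑ j ∈ D, (sgn (ε j) - sgn (ε' j)) * bc j
          = ∑ j ∈ s, 2 * bc j + ∑ j ∈ t, (-2) * bc j := by
        rw [hs, ht, ← Finset.sum_filter_add_sum_filter_not D (fun j => ε j = true)]
        congr 1
        · refine Finset.sum_congr rfl fun j hj => ?_
          have hjD := (Finset.mem_filter.mp hj).1
          have hεj : ε j = true := (Finset.mem_filter.mp hj).2
          have hεj' : ε' j ≠ ε j := ((Finset.mem_filter.mp hjD).2).symm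
          have hf : ε' j = false := by
            cases h' : ε' j
            · rfl
            · exact absurd (h'.trans hεj.symm) hεj'
          have e1 : sgn true = 1 := by simp [hsgn]
          have e2 : sgn false = -1 := by simp [hsgn]
          rw [hεj, hf, e1, e2]
          ring
        · refine Finset.sum_congr rfl fun j hj => ?_
          have hjD := (Finset.mem_filter.mp hj).1
          have hεj : ε j = false := by
            have := (Finset.mem_filter.mp hj).2
            cases h' : ε j
            · rfl
            · exact absurd h' this
          have hεj' : ε' j ≠ ε j := ((Finset.mem_filter.mp hjD).2).symm
          have hf : ε' j = true := by
            cases h' : ε' j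
            · exact absurd (h'.trans hεj.symm) hεj'
            · rfl
          have e1 : sgn true = 1 := by simp [hsgn]
          have e2 : sgn false = -1 := by simp [hsgn]
          rw [hεj, hf, e1, e2]
          ring
      have hsum_s : (s.val.map bc).sum = ∑ j ∈ s, bc j := rfl
      have hsum_t : (t.val.map bc).sum = ∑ j ∈ t, bc j := rfl
      rw [h1, h2, h3, hsum_s, hsum_t, ← Finset.mul_sum, ← Finset.mul_sum]
      ring
    have hcard2 : Multiset.card s.val + Multiset.card t.val ≤ 2 * α := by
      show s.card + t.card ≤ 2 * α
      omega
    have hlow : 2 * b ≤ |val ε - val ε'| := by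
      rw [hdiff, abs_mul, abs_two]
      have := hsep s.val t.val hstne hcard2
      linarith
    have hupA : |val ε - X| < b * (n : ℝ) ^ (-(α : ℤ)) := by
      rw [hA] at hε
      exact (Finset.mem_filter.mp hε).2
    have hupA' : |val ε' - X| < b * (n : ℝ) ^ (-(α : ℤ)) := by
      rw [hA] at hε'
      exact (Finset.mem_filter.mp hε').2
    have hup : |val ε - val ε'| < 2 * b := by
      have h1 : b * (n : ℝ) ^ (-(α : ℤ)) ≤ b := by
        nlinarith
      calc |val ε - val ε'| ≤ |val ε - X| + |val ε' - X| := by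
            rw [show val ε - val ε' = (val ε - X) + -(val ε' - X) by ring]
            exact (abs_add_le _ _).trans_eq (by rw [abs_neg])
        _ < 2 * b := by linarith
    linarith
  -- packing bound: A.card * choose n α ≤ 2 ^ n  (only used when 2α ≤ n)
  have hpack : 2 * α ≤ n → A.card * n.choose α ≤ 2 ^ n := by
    intro h2a
    set P : Finset (Finset (Fin n)) := Finset.univ.powersetCard α with hP
    have hPcard : P.card = n.choose α := by
      rw [hP, Finset.card_powersetCard, Finset.card_univ, Fintype.card_fin]
    have hPmem : ∀ S ∈ P, S.card = α := by
      intro S hS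
      rw [hP, Finset.mem_powersetCard] at hS
      exact hS.2
    set F : (Fin n → Bool) × Finset (Fin n) → (Fin n → Bool) :=
      fun p j => xor (p.1 j) (decide (j ∈ p.2)) with hF
    have hinj : Set.InjOn F ↑(A ×ˢ P) := by
      intro p hp q hq heq
      rw [Finset.coe_product] at hp hq
      obtain ⟨hp1, hp2⟩ := hp
      obtain ⟨hq1, hq2⟩ := hq
      have hp1' : p.1 ∈ A := hp1
      have hq1' : q.1 ∈ A := hq1
      have hp2' : p.2 ∈ P := hp2
      have hq2' : q.2 ∈ P := hq2
      have heq' : ∀ j, xor (p.1 j) (decide (j ∈ p.2)) = xor (q.1 j) (decide (j ∈ q.2)) :=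
        fun j => congrFun heq j
      have h1 : p.1 = q.1 := by
        by_contra hne
        have hbig := hsepA p.1 hp1' q.1 hq1' hne
        have hsub : (Finset.univ.filter (fun j => p.1 j ≠ q.1 j)) ⊆ p.2 ∪ q.2 := by
          intro j hj
          have hjne : p.1 j ≠ q.1 j := (Finset.mem_filter.mp hj).2
          have := heq' j
          by_contra hnotin
          rw [Finset.mem_union] at hnotin
          push_neg at hnotin
          have e1 : decide (j ∈ p.2) = false := decide_eq_false hnotin.1
          have e2 : decide (j ∈ q.2) = false := decide_eq_false hnotin.2
          rw [e1, e2, Bool.xor_false, Bool.xor_false] at this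
          exact hjne this
        have := Finset.card_le_card hsub
        have := Finset.card_union_le p.2 q.2
        have hc1 := hPmem p.2 hp2'
        have hc2 := hPmem q.2 hq2'
        omega
      have h2 : p.2 = q.2 := by
        ext j
        have := heq' j
        rw [h1] at this
        have hdec : decide (j ∈ p.2) = decide (j ∈ q.2) := by
          cases hcase : q.1 j <;> rw [hcase] at this <;> simpa using this
        constructor
        · intro hj
          have : decide (j ∈ q.2) = true := by rw [← hdec]; exact decide_eq_true hj
          exact of_decide_eq_true this
        · intro hj
          have : decide (j ∈ p.2) = true := by rw [hdec]; exact decide_eq_true hj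
          exact of_decide_eq_true this
      exact Prod.ext h1 h2
    have hcard := Finset.card_le_card_of_injOn F
      (fun p _ => Finset.mem_univ (F p)) hinj
    rw [Finset.card_product, Finset.card_univ] at hcard
    have : Fintype.card (Fin n → Bool) = 2 ^ n := by
      simp [Fintype.card_fun]
    rw [this, hPcard] at hcard
    exact hcard
  -- convert to real and finish
  have htoReal : (μ {ω | |(∑ j, r j ω * bc j) - X| < b * (n : ℝ) ^ (-(α : ℤ))}).toReal ≤
      (A.card : ℝ) * (1 / 2) ^ n := by
    have hfin : ((A.card : ℝ≥0∞) * (1 / 2) ^ n) ≠ ⊤ := by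
      apply ENNReal.mul_ne_top (by simp)
      exact ENNReal.pow_ne_top (by norm_num)
    have := ENNReal.toReal_mono hfin hle
    rw [ENNReal.toReal_mul, ENNReal.toReal_pow] at this
    simpa using this
  rcases lt_or_ge n (2 * α) with hcase | hcase
  · -- n < 2α : trivial bound
    have h1 : (μ {ω | |(∑ j, r j ω * bc j) - X| < b * (n : ℝ) ^ (-(α : ℤ))}).toReal ≤ 1 := by
      have := prob_le_one (μ := μ)
        (s := {ω | |(∑ j, r j ω * bc j) - X| < b * (n : ℝ) ^ (-(α : ℤ))})
      exact ENNReal.toReal_mono (by simp) this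
    have h2 : (1 : ℝ) ≤ (2 * α : ℝ) ^ α * α.factorial * 2 ^ α * (n : ℝ) ^ (-(α : ℤ)) := by
      rw [hzeq]
      rw [mul_comm _ (((n:ℝ) ^ α)⁻¹), ← div_eq_inv_mul, le_div_iff₀ hnpow, one_mul]
      have hna : (n : ℝ) ^ α ≤ (2 * α : ℝ) ^ α := by
        apply pow_le_pow_left₀ (by positivity)
        exact_mod_cast Nat.le_of_lt hcase
      have hf1 : (1 : ℝ) ≤ (α.factorial : ℝ) := by exact_mod_cast α.factorial_pos
      have hf2 : (1 : ℝ) ≤ (2 : ℝ) ^ α := one_le_pow₀ (by norm_num)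
      calc (n : ℝ) ^ α ≤ (2 * α : ℝ) ^ α := hna
        _ = (2 * α : ℝ) ^ α * 1 * 1 := by ring
        _ ≤ (2 * α : ℝ) ^ α * α.factorial * 2 ^ α := by
            apply mul_le_mul (mul_le_mul_of_nonneg_left hf1 (by positivity)) hf2
              (by norm_num) (by positivity)
    linarith
  · -- 2α ≤ n : packing bound
    have hkey := hpack hcase
    have hchoosepos : 0 < n.choose α := Nat.choose_pos (by omega)
    have hkeyR : (A.card : ℝ) * (n.choose α : ℝ) ≤ 2 ^ n := by
      exact_mod_cast hkey
    have h2npos : (0 : ℝ) < 2 ^ n := by positivity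
    have hchoosR : (0 : ℝ) < (n.choose α : ℝ) := by exact_mod_cast hchoosepos
    have hA2 : (A.card : ℝ) * (1 / 2) ^ n ≤ 1 / (n.choose α : ℝ) := by
      have e : ((1 : ℝ) / 2) ^ n = 1 / 2 ^ n := by rw [div_pow, one_pow]
      rw [e, mul_one_div, div_le_div_iff₀ h2npos hchoosR, one_mul]
      linarith [hkeyR]
    have hm : n ≤ 2 * (n + 1 - α) := by omega
    have hmR : (n : ℝ) ≤ 2 * ((n + 1 - α : ℕ) : ℝ) := by exact_mod_cast hm
    have hp1 : (n : ℝ) ^ α ≤ (2 * ((n + 1 - α : ℕ) : ℝ)) ^ α :=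
      pow_le_pow_left₀ (by positivity) hmR α
    have hp2 : ((n + 1 - α : ℕ) : ℝ) ^ α / (α.factorial : ℝ) ≤ (n.choose α : ℝ) :=
      Nat.pow_le_choose α n
    have hfpos : (0 : ℝ) < (α.factorial : ℝ) := by exact_mod_cast α.factorial_pos
    have hp3 : ((n + 1 - α : ℕ) : ℝ) ^ α ≤ (α.factorial : ℝ) * (n.choose α : ℝ) := by
      rw [div_le_iff₀ hfpos] at hp2
      linarith
    have h2a1 : (1 : ℝ) ≤ (2 * α : ℝ) ^ α := by
      apply one_le_pow₀
      have : (1 : ℝ) ≤ (α : ℝ) := by exact_mod_cast hα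
      linarith
    have hfinal : (n : ℝ) ^ α ≤ (2 * α : ℝ) ^ α * α.factorial * 2 ^ α * (n.choose α : ℝ) := by
      calc (n : ℝ) ^ α ≤ (2 * ((n + 1 - α : ℕ) : ℝ)) ^ α := hp1
        _ = 2 ^ α * ((n + 1 - α : ℕ) : ℝ) ^ α := mul_pow 2 _ α
        _ ≤ 2 ^ α * ((α.factorial : ℝ) * (n.choose α : ℝ)) :=
            mul_le_mul_of_nonneg_left hp3 (by positivity)
        _ = 1 * (2 ^ α * ((α.factorial : ℝ) * (n.choose α : ℝ))) := by ring
        _ ≤ (2 * α : ℝ) ^ α * (2 ^ α * ((α.factorial : ℝ) * (n.choose α : ℝ))) :=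
            mul_le_mul_of_nonneg_right h2a1 (by positivity)
        _ = (2 * α : ℝ) ^ α * α.factorial * 2 ^ α * (n.choose α : ℝ) := by ring
    have hrhs : 1 / (n.choose α : ℝ) ≤
        (2 * α : ℝ) ^ α * α.factorial * 2 ^ α * (n : ℝ) ^ (-(α : ℤ)) := by
      rw [hzeq, ← div_eq_mul_inv, div_le_div_iff₀ hchoosR hnpow, one_mul]
      linarith [hfinal]
    linarith [htoReal, hA2, hrhs]
end
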